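/- arXiv:1806.04188 — 4 statements merged into one kernel-verified Lean document; each statement's English description precedes it below -/
import Mathlib

section
/- If M and N are matroids in ℰ₃ and χ(M) ≥ dim(N) + 4, then M contains N as an induced restriction. -/
/-- A simple binary matroid `M = (E, G)`: a dimension `n` together with a ground set `E`
of nonzero vectors of `𝔽₂ⁿ` (the points of `G = 𝔽₂ⁿ \ {0}`). -/
structure BinMatroid where
  dim : ℕ
  E : Set (Fin dim → ZMod 2)
  zero_not_mem : 0 ∉ E

namespace BinMatroid

/-- `M.HasIR N` : `M` contains `N` as an induced restriction, i.e. there is an injective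
linear map `φ` with `φ(E(N)) = E(M) ∩ (φ(G') \ {0})`. -/
def HasIR (M N : BinMatroid) : Prop :=
  ∃ φ : (Fin N.dim → ZMod 2) →ₗ[ZMod 2] (Fin M.dim → ZMod 2),
    Function.Injective φ ∧ φ '' N.E = M.E ∩ (Set.range φ \ {0})

/-- Isomorphism of binary matroids: a bijective induced embedding. -/
def Iso (M N : BinMatroid) : Prop :=
  ∃ φ : (Fin N.dim → ZMod 2) →ₗ[ZMod 2] (Fin M.dim → ZMod 2),
    Function.Bijective φ ∧ φ '' N.E = M.E ∩ (Set.range φ \ {0})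

/-- The critical number of the induced restriction of the ground set `E` to the flat of
the subspace `F`: the least `k` such that some flat of `F` of dimension `dim F - k`
is disjoint from `E`. -/
noncomputable def critNumRes {n : ℕ} (E : Set (Fin n → ZMod 2))
    (F : Submodule (ZMod 2) (Fin n → ZMod 2)) : ℕ :=
  sInf {k : ℕ | ∃ W : Submodule (ZMod 2) (Fin n → ZMod 2), W ≤ F ∧
    Module.finrank (ZMod 2) W = Module.finrank (ZMod 2) F - k ∧
    Disjoint ((W : Set (Fin n → ZMod 2)) \ {0}) E}

/-- The critical number `χ(M)`: the least `k ≥ 0` such that some flat of dimension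
`n - k` is disjoint from `E`. -/
noncomputable def critNum (M : BinMatroid) : ℕ :=
  sInf {k : ℕ | ∃ W : Submodule (ZMod 2) (Fin M.dim → ZMod 2),
    Module.finrank (ZMod 2) W = M.dim - k ∧
    Disjoint ((W : Set (Fin M.dim → ZMod 2)) \ {0}) M.E}

/-- `M ∈ ℰ_k` : every induced restriction of `M` to a flat of dimension at least `k`
has even size. -/
def MemE (k : ℕ) (M : BinMatroid) : Prop :=
  ∀ W : Submodule (ZMod 2) (Fin M.dim → ZMod 2),
    k ≤ Module.finrank (ZMod 2) W →
    Even (M.E ∩ ((W : Set (Fin M.dim → ZMod 2)) \ {0})).ncard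

/-- `M` is full-rank: `E` spans `𝔽₂ⁿ`. -/
def FullRank (M : BinMatroid) : Prop :=
  Submodule.span (ZMod 2) M.E = ⊤

/-- `M` is (isomorphic to) the doubling of `M₀`: `M₀` is identified, via an injective
linear map `φ`, with the restriction of `M` to a hyperplane `H = range φ`, there is
`w ∈ G − (E ∪ H)`, and `E = (E ∩ H) ∪ (w + (E ∩ H))`. -/
def IsDoublingOf (M M₀ : BinMatroid) : Prop :=
  M.dim = M₀.dim + 1 ∧
  ∃ φ : (Fin M₀.dim → ZMod 2) →ₗ[ZMod 2] (Fin M.dim → ZMod 2),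
    Function.Injective φ ∧
    ∃ w : Fin M.dim → ZMod 2, w ≠ 0 ∧ w ∉ Set.range φ ∧ w ∉ M.E ∧
      M.E = φ '' M₀.E ∪ (fun x => w + x) '' (φ '' M₀.E)

/-- `M` arises from `M₀` by a (possibly empty) sequence of doublings. -/
def ArisesByDoublings (M M₀ : BinMatroid) : Prop :=
  ∃ M' : BinMatroid,
    Relation.ReflTransGen (fun A B => IsDoublingOf B A) M₀ M' ∧ M.Iso M'

/-- `M` is (a copy of) `AG°(t−1, 2)`, the matroid `((G − H) ∪ {x}, G)` with `H` a
hyperplane of `G` and `x ∈ H`, where `t = M.dim`. -/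
def IsAGo (M : BinMatroid) : Prop :=
  ∃ H : Submodule (ZMod 2) (Fin M.dim → ZMod 2),
    Module.finrank (ZMod 2) H + 1 = M.dim ∧
    ∃ x ∈ (H : Set (Fin M.dim → ZMod 2)) \ {0},
      M.E = ({v | v ≠ 0} \ (H : Set (Fin M.dim → ZMod 2))) ∪ {x}

/-- `M` is a Bose–Burton geometry of order `k`: `E = G − F` for a flat `F` of
dimension `n − k`. -/
def IsBoseBurton (M : BinMatroid) (k : ℕ) : Prop :=
  k ≤ M.dim ∧ ∃ W : Submodule (ZMod 2) (Fin M.dim → ZMod 2),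
    Module.finrank (ZMod 2) W = M.dim - k ∧
    M.E = {v | v ≠ 0} \ (W : Set (Fin M.dim → ZMod 2))

/-- The ground set `E` (of a matroid of the ambient dimension `n`) is the semidoubling
of its restriction to the hyperplane `H₁` with respect to the hyperplane `H₀` of `H₁`:
there is `w ∈ G − (E ∪ H₁)` with `|{x, x+w} ∩ E| ∈ {0, 2}` for every `x ∈ H₀` and
`|{x, x+w} ∩ E| = 1` for every `x ∈ H₁ − H₀`. -/
def IsSemidoublingWrt {n : ℕ} (E : Set (Fin n → ZMod 2))
    (H₁ H₀ : Submodule (ZMod 2) (Fin n → ZMod 2)) : Prop :=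
  H₀ ≤ H₁ ∧ Module.finrank (ZMod 2) H₀ + 1 = Module.finrank (ZMod 2) H₁ ∧
  ∃ w : Fin n → ZMod 2, w ≠ 0 ∧ w ∉ H₁ ∧ w ∉ E ∧
    (∀ x ∈ (H₀ : Set (Fin n → ZMod 2)) \ {0},
      (({x, x + w} : Set (Fin n → ZMod 2)) ∩ E).ncard = 0 ∨
      (({x, x + w} : Set (Fin n → ZMod 2)) ∩ E).ncard = 2) ∧
    (∀ x ∈ (H₁ : Set (Fin n → ZMod 2)) \ (H₀ : Set (Fin n → ZMod 2)),
      (({x, x + w} : Set (Fin n → ZMod 2)) ∩ E).ncard = 1)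

/-- The ground set `E` is a semidoubling of its restriction to the hyperplane `H₁`
(with respect to some hyperplane `H₀` of `H₁`). -/
def IsSemidoublingOfRes {n : ℕ} (E : Set (Fin n → ZMod 2))
    (H₁ : Submodule (ZMod 2) (Fin n → ZMod 2)) : Prop :=
  ∃ H₀ : Submodule (ZMod 2) (Fin n → ZMod 2), IsSemidoublingWrt E H₁ H₀

/-- `M` is (isomorphic to) a semidoubling of `M₀`: `M₀` is identified, via an injective
linear map `φ`, with the restriction of `M` to the hyperplane `range φ`, and `M` is a
semidoubling of that restriction. -/
def IsSemidoublingOf (M M₀ : BinMatroid) : Prop :=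
  M.dim = M₀.dim + 1 ∧
  ∃ φ : (Fin M₀.dim → ZMod 2) →ₗ[ZMod 2] (Fin M.dim → ZMod 2),
    Function.Injective φ ∧
    φ '' M₀.E = M.E ∩ (Set.range φ \ {0}) ∧
    IsSemidoublingOfRes M.E (LinearMap.range φ)

/-- `M` arises from `M₀` by a (possibly empty) sequence of semidoublings. -/
def ArisesBySemidoublings (M M₀ : BinMatroid) : Prop :=
  ∃ M' : BinMatroid,
    Relation.ReflTransGen (fun A B => IsSemidoublingOf B A) M₀ M' ∧ M.Iso M'

end BinMatroid

/-- A triangle of `G`: a set `{x, y, z}` of three distinct nonzero vectors with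
`x + y + z = 0`. -/
def IsTriangle {n : ℕ} (T : Set (Fin n → ZMod 2)) : Prop :=
  ∃ x y z : Fin n → ZMod 2, x ≠ 0 ∧ y ≠ 0 ∧ z ≠ 0 ∧
    x ≠ y ∧ x ≠ z ∧ y ≠ z ∧ x + y + z = 0 ∧ T = {x, y, z}

/-- `I₃`, the claw: the 3-dimensional matroid whose ground set is the three standard
basis vectors of `𝔽₂³`. -/
def I3 : BinMatroid where
  dim := 3
  E := Set.range fun i : Fin 3 => (Pi.single i 1 : Fin 3 → ZMod 2)
  zero_not_mem := by
    rintro ⟨i, hi⟩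
    have := congrFun hi i
    simp [Pi.single_eq_same] at this

/-- `F₇`, the Fano plane: the 3-dimensional matroid whose ground set is all of
`𝔽₂³ \ {0}`. -/
def F7 : BinMatroid where
  dim := 3
  E := {v | v ≠ 0}
  zero_not_mem := by simp

/-- `K₅`: the 4-dimensional matroid whose ground set is the set of vectors of Hamming
weight 1 or 2 in `𝔽₂⁴`. -/
def K5 : BinMatroid where
  dim := 4
  E := {v | hammingNorm v = 1 ∨ hammingNorm v = 2}
  zero_not_mem := by
    intro h
    simp only [Set.mem_setOf_eq, hammingNorm_zero] at h
    omega

set_option linter.unusedSectionVars false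
set_option linter.unusedVariables false

namespace Stmt15Aux
open Module


abbrev V (n : ℕ) := Fin n → ZMod 2

variable {n : ℕ}

lemma z01 (c : ZMod 2) : c = 0 ∨ c = 1 := by revert c; decide

lemma zne1 {c : ZMod 2} (h : c ≠ 0) : c = 1 := by revert h; revert c; decide

lemma addself (v : V n) : v + v = 0 := by
  funext i; show v i + v i = 0; generalize v i = a; revert a; decide

def B (f : V n → ZMod 2) (x y : V n) : ZMod 2 := f (x + y) + f x + f y

section Quadratic

variable {f : V n → ZMod 2} (hf0 : f 0 = 0)
  (hC : ∀ x y z : V n, f (x+y+z) + f (x+y) + f (x+z) + f (y+z) + f x + f y + f z = 0)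

include hf0 hC

lemma Bsym (x y : V n) : B f x y = B f y x := by
  unfold B; rw [add_comm x y]; ring

lemma Badd1 (x y z : V n) : B f (x + y) z = B f x z + B f y z := by
  have h := hC x y z
  unfold B
  generalize f (x+y+z) = a1 at h ⊢
  generalize f (x+y) = a2 at h ⊢
  generalize f (x+z) = a3 at h ⊢
  generalize f (y+z) = a4 at h ⊢
  generalize f x = a5 at h ⊢
  generalize f y = a6 at h ⊢
  generalize f z = a7 at h ⊢
  revert h; revert a1 a2 a3 a4 a5 a6 a7; decide

lemma Bzero1 (z : V n) : B f 0 z = 0 := by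
  unfold B; rw [zero_add, hf0]; generalize f z = a; revert a; decide

lemma Bself (x : V n) : B f x x = 0 := by
  unfold B; rw [addself, hf0]; generalize f x = a; revert a; decide

lemma Badd2 (x y z : V n) : B f x (y + z) = B f x y + B f x z := by
  rw [Bsym hf0 hC, Badd1 hf0 hC, Bsym hf0 hC, Bsym hf0 hC z x]

lemma Bsmul1 (c : ZMod 2) (x y : V n) : B f (c • x) y = c * B f x y := by
  rcases z01 c with rfl | rfl
  · simp [Bzero1 hf0 hC]
  · simp

lemma Bsmul2 (c : ZMod 2) (x y : V n) : B f x (c • y) = c * B f x y := by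
  rw [Bsym hf0 hC, Bsmul1 hf0 hC, Bsym hf0 hC]

lemma fadd (x y : V n) : f (x + y) = f x + f y + B f x y := by
  unfold B; generalize f (x+y) = a; generalize f x = b; generalize f y = c
  revert a b c; decide

lemma fsmul (c : ZMod 2) (x : V n) : f (c • x) = c * f x := by
  rcases z01 c with rfl | rfl
  · simpa using hf0
  · simp

lemma Bsum1 {ι : Type*} (s : Finset ι) (x : ι → V n) (z : V n) :
    B f (∑ i ∈ s, x i) z = ∑ i ∈ s, B f (x i) z := by
  classical
  induction s using Finset.induction_on with
  | empty => simpa using Bzero1 hf0 hC z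
  | @insert a s ha ih =>
    rw [Finset.sum_insert ha, Badd1 hf0 hC, ih, Finset.sum_insert ha]

lemma Bsum2 {ι : Type*} (s : Finset ι) (x : ι → V n) (z : V n) :
    B f z (∑ i ∈ s, x i) = ∑ i ∈ s, B f z (x i) := by
  rw [Bsym hf0 hC, Bsum1 hf0 hC]
  exact Finset.sum_congr rfl fun i _ => Bsym hf0 hC _ _

lemma fsum0 {ι : Type*} (s : Finset ι) (q : ι → V n) (c : ι → ZMod 2)
    (hq : ∀ i, f (q i) = 0) (horth : ∀ i j, i ≠ j → B f (q i) (q j) = 0) :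
    f (∑ l ∈ s, c l • q l) = 0 := by
  classical
  induction s using Finset.induction_on with
  | empty => simpa using hf0
  | @insert a s ha ih =>
    rw [Finset.sum_insert ha, fadd hf0 hC, ih, fsmul hf0 hC, hq a,
      Bsmul1 hf0 hC, Bsum2 hf0 hC]
    have hs : ∑ l ∈ s, B f (q a) (c l • q l) = 0 := by
      apply Finset.sum_eq_zero
      intro l hl
      rw [Bsmul2 hf0 hC, horth a l (fun h => ha (h ▸ hl))]
      ring
    rw [hs]
    ring

end Quadratic

-- rank helpers
lemma finrank_inf_ker (W : Submodule (ZMod 2) (V n)) (L : V n →ₗ[ZMod 2] ZMod 2) :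
    finrank (ZMod 2) W ≤ finrank (ZMod 2) ↥(W ⊓ LinearMap.ker L) + 1 := by
  classical
  set ψ : W →ₗ[ZMod 2] ZMod 2 := L.comp W.subtype with hψ
  have h1 : finrank (ZMod 2) (LinearMap.range ψ) + finrank (ZMod 2) (LinearMap.ker ψ)
      = finrank (ZMod 2) W := LinearMap.finrank_range_add_finrank_ker ψ
  have h2 : finrank (ZMod 2) (LinearMap.range ψ) ≤ 1 := by
    have := Submodule.finrank_le (LinearMap.range ψ)
    simpa using this
  have h3 : (LinearMap.ker ψ).map W.subtype = W ⊓ LinearMap.ker L := by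
    ext v
    simp only [Submodule.mem_map, LinearMap.mem_ker, Submodule.mem_inf, hψ,
      LinearMap.comp_apply, Submodule.coe_subtype]
    constructor
    · rintro ⟨⟨w, hw⟩, hker, rfl⟩; exact ⟨hw, hker⟩
    · rintro ⟨hv, hker⟩; exact ⟨⟨v, hv⟩, hker, rfl⟩
  have h4 : finrank (ZMod 2) ↥(W ⊓ LinearMap.ker L) = finrank (ZMod 2) (LinearMap.ker ψ) := by
    rw [← h3]; exact Submodule.finrank_map_subtype_eq W _
  omega

lemma finrank_sup_span_le (Z : Submodule (ZMod 2) (V n)) (x : V n) :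
    finrank (ZMod 2) ↥(Z ⊔ Submodule.span (ZMod 2) {x}) ≤ finrank (ZMod 2) Z + 1 := by
  have h := Submodule.finrank_sup_add_finrank_inf_eq Z (Submodule.span (ZMod 2) {x})
  have h2 : finrank (ZMod 2) ↥(Submodule.span (ZMod 2) {x}) ≤ 1 := by
    have := finrank_span_le_card (R := ZMod 2) ({x} : Set (V n))
    simpa using this
  omega

lemma finrank_sup_span_eq (Z : Submodule (ZMod 2) (V n)) (x : V n) (hx0 : x ≠ 0) (hx : x ∉ Z) :
    finrank (ZMod 2) ↥(Z ⊔ Submodule.span (ZMod 2) {x}) = finrank (ZMod 2) Z + 1 := by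
  have h := Submodule.finrank_sup_add_finrank_inf_eq Z (Submodule.span (ZMod 2) {x})
  have h2 : finrank (ZMod 2) ↥(Submodule.span (ZMod 2) {x}) = 1 := finrank_span_singleton hx0
  have h3 : Z ⊓ Submodule.span (ZMod 2) {x} = ⊥ := by
    rw [eq_bot_iff]
    intro v hv
    rw [Submodule.mem_inf] at hv
    obtain ⟨hvZ, hvx⟩ := hv
    rw [Submodule.mem_span_singleton] at hvx
    obtain ⟨c, rfl⟩ := hvx
    rcases z01 c with rfl | rfl
    · simp
    · simp only [one_smul] at hvZ ⊢; exact absurd hvZ hx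
  rw [h3] at h
  simp only [finrank_bot] at h
  omega

lemma exists_not_mem {Z W : Submodule (ZMod 2) (V n)} (hle : Z ≤ W)
    (hlt : finrank (ZMod 2) Z < finrank (ZMod 2) W) : ∃ x ∈ W, x ∉ Z := by
  by_contra h
  push_neg at h
  have : W ≤ Z := h
  exact absurd (Submodule.finrank_mono this) (by omega)

section Pairs

variable {f : V n → ZMod 2} (hf0 : f 0 = 0)
  (hC : ∀ x y z : V n, f (x+y+z) + f (x+y) + f (x+z) + f (y+z) + f x + f y + f z = 0)

include hf0 hC

lemma hyppair (W : Submodule (ZMod 2) (V n))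
    (hW : ∀ Z : Submodule (ZMod 2) (V n), Z ≤ W → (∀ v ∈ Z, f v = 0) →
      finrank (ZMod 2) Z + 3 ≤ finrank (ZMod 2) W) :
    ∃ p ∈ W, ∃ q ∈ W, f p = 0 ∧ f q = 0 ∧ B f p q = 1 := by
  classical
  by_cases hex : ∃ p ∈ W, f p = 0 ∧ ∃ w ∈ W, B f p w ≠ 0
  · obtain ⟨p, hpW, hfp, w, hwW, hBpw⟩ := hex
    have hBpw1 : B f p w = 1 := zne1 hBpw
    rcases z01 (f w) with hfw | hfw
    · exact ⟨p, hpW, w, hwW, hfp, hfw, hBpw1⟩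
    · refine ⟨p, hpW, w + p, add_mem hwW hpW, hfp, ?_, ?_⟩
      · rw [fadd hf0 hC, hfw, hfp, Bsym hf0 hC, hBpw1]; decide
      · rw [Badd2 hf0 hC, hBpw1, Bself hf0 hC]; decide
  · push_neg at hex
    exfalso
    set Z₀ : Submodule (ZMod 2) (V n) :=
      { carrier := {v | v ∈ W ∧ f v = 0}
        add_mem' := by
          rintro a b ⟨haW, ha0⟩ ⟨hbW, hb0⟩
          refine ⟨add_mem haW hbW, ?_⟩
          rw [fadd hf0 hC, ha0, hb0, hex a haW ha0 b hbW]
          decide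
        zero_mem' := ⟨zero_mem W, hf0⟩
        smul_mem' := by
          intro c v hv
          rcases z01 c with rfl | rfl
          · rw [zero_smul]; exact ⟨zero_mem W, hf0⟩
          · rw [one_smul]; exact hv } with hZ₀def
    have hZ₀W : Z₀ ≤ W := fun v hv => hv.1
    have hZ₀mem : ∀ v, v ∈ Z₀ ↔ v ∈ W ∧ f v = 0 := fun v => Iff.rfl
    have hZ3 : finrank (ZMod 2) Z₀ + 3 ≤ finrank (ZMod 2) W :=
      hW Z₀ hZ₀W (fun v hv => hv.2)
    obtain ⟨x, hxW, hxZ⟩ := exists_not_mem hZ₀W (by omega)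
    set Z₁ := Z₀ ⊔ Submodule.span (ZMod 2) {x} with hZ₁def
    have hZ₁W : Z₁ ≤ W := sup_le hZ₀W
      ((Submodule.span_singleton_le_iff_mem x W).mpr hxW)
    have hfr1 : finrank (ZMod 2) Z₁ ≤ finrank (ZMod 2) Z₀ + 1 := finrank_sup_span_le Z₀ x
    obtain ⟨y, hyW, hyZ1⟩ := exists_not_mem hZ₁W (by omega)
    set Z₂ := Z₁ ⊔ Submodule.span (ZMod 2) {y} with hZ₂def
    have hZ₂W : Z₂ ≤ W := sup_le hZ₁W
      ((Submodule.span_singleton_le_iff_mem y W).mpr hyW)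
    have hfr2 : finrank (ZMod 2) Z₂ ≤ finrank (ZMod 2) Z₁ + 1 := finrank_sup_span_le Z₁ y
    obtain ⟨z, hzW, hzZ2⟩ := exists_not_mem hZ₂W (by omega)
    have hxZ1 : x ∈ Z₁ := Submodule.mem_sup_right (Submodule.mem_span_singleton_self x)
    have hxZ2 : x ∈ Z₂ := Submodule.mem_sup_left hxZ1
    have hyZ2 : y ∈ Z₂ := Submodule.mem_sup_right (Submodule.mem_span_singleton_self y)
    have hZ₀Z₁ : Z₀ ≤ Z₁ := le_sup_left
    have hZ₀Z₂ : Z₀ ≤ Z₂ := le_trans hZ₀Z₁ le_sup_left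
    have hZ₁Z₂ : Z₁ ≤ Z₂ := le_sup_left
    have hyZ0 : y ∉ Z₀ := fun h => hyZ1 (hZ₀Z₁ h)
    have hzZ0 : z ∉ Z₀ := fun h => hzZ2 (hZ₀Z₂ h)
    -- combos not in Z₀
    have hxyZ0 : x + y ∉ Z₀ := by
      intro h
      apply hyZ1
      rw [show y = x + (x + y) by linear_combination -(addself x)]
      exact add_mem hxZ1 (hZ₀Z₁ h)
    have hxzZ0 : x + z ∉ Z₀ := by
      intro h
      apply hzZ2
      rw [show z = x + (x + z) by linear_combination -(addself x)]
      exact add_mem hxZ2 (hZ₀Z₂ h)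
    have hyzZ0 : y + z ∉ Z₀ := by
      intro h
      apply hzZ2
      rw [show z = y + (y + z) by linear_combination -(addself y)]
      exact add_mem hyZ2 (hZ₀Z₂ h)
    have hxyzZ0 : x + y + z ∉ Z₀ := by
      intro h
      apply hzZ2
      rw [show z = x + (y + (x + y + z)) by linear_combination -(addself x) - (addself y)]
      exact add_mem hxZ2 (add_mem hyZ2 (hZ₀Z₂ h))
    have fval : ∀ v, v ∈ W → v ∉ Z₀ → f v = 1 := by
      intro v hvW hvZ
      exact zne1 (fun h0 => hvZ ⟨hvW, h0⟩)
    have fx := fval x hxW hxZ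
    have fy := fval y hyW hyZ0
    have fz := fval z hzW hzZ0
    have fxy := fval (x+y) (add_mem hxW hyW) hxyZ0
    have fxz := fval (x+z) (add_mem hxW hzW) hxzZ0
    have fyz := fval (y+z) (add_mem hyW hzW) hyzZ0
    have fxyz := fval (x+y+z) (add_mem (add_mem hxW hyW) hzW) hxyzZ0
    have e1 : B f x y = 1 := by unfold B; rw [fxy, fx, fy]; decide
    have e2 : B f x z = 1 := by unfold B; rw [fxz, fx, fz]; decide
    have e3 : B f x (y + z) = 1 := by
      unfold B
      rw [show x + (y + z) = x + y + z by ring, fxyz, fx, fyz]; decide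
    have h1 := Badd2 hf0 hC x y z
    rw [e1, e2, e3] at h1
    exact absurd h1 (by decide)

lemma pairext : ∀ (t : ℕ) (W : Submodule (ZMod 2) (V n)),
    (∀ Z : Submodule (ZMod 2) (V n), Z ≤ W → (∀ v ∈ Z, f v = 0) →
      finrank (ZMod 2) Z + t + 3 ≤ finrank (ZMod 2) W) →
    ∃ p q : Fin t → V n, (∀ i, p i ∈ W) ∧ (∀ i, q i ∈ W) ∧
      (∀ i, f (p i) = 0) ∧ (∀ i, f (q i) = 0) ∧
      (∀ i j, B f (p i) (q j) = if i = j then 1 else 0) ∧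
      (∀ i j, i ≠ j → B f (p i) (p j) = 0) ∧
      (∀ i j, i ≠ j → B f (q i) (q j) = 0) := by
  intro t
  induction t with
  | zero =>
    intro W _
    exact ⟨Fin.elim0, Fin.elim0, fun i => i.elim0, fun i => i.elim0, fun i => i.elim0,
      fun i => i.elim0, fun i => i.elim0, fun i => i.elim0, fun i => i.elim0⟩
  | succ t ih =>
    intro W hW
    obtain ⟨p₀, hp₀W, q₀, hq₀W, hfp₀, hfq₀, hB₀⟩ :=
      hyppair hf0 hC W (fun Z hZ hz => by have := hW Z hZ hz; omega)
    set L1 : V n →ₗ[ZMod 2] ZMod 2 :=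
      { toFun := fun v => B f v p₀
        map_add' := fun a b => Badd1 hf0 hC a b p₀
        map_smul' := fun c a => by simpa using Bsmul1 hf0 hC c a p₀ } with hL1
    set L2 : V n →ₗ[ZMod 2] ZMod 2 :=
      { toFun := fun v => B f v q₀
        map_add' := fun a b => Badd1 hf0 hC a b q₀
        map_smul' := fun c a => by simpa using Bsmul1 hf0 hC c a q₀ } with hL2
    set W' := W ⊓ LinearMap.ker L1 ⊓ LinearMap.ker L2 with hW'def
    have hmemW' : ∀ v, v ∈ W' → v ∈ W ∧ B f v p₀ = 0 ∧ B f v q₀ = 0 := by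
      intro v hv
      rw [hW'def, Submodule.mem_inf, Submodule.mem_inf] at hv
      exact ⟨hv.1.1, hv.1.2, hv.2⟩
    have hW'le : W' ≤ W := le_trans inf_le_left inf_le_left
    have hfrW' : finrank (ZMod 2) W ≤ finrank (ZMod 2) W' + 2 := by
      have ha := finrank_inf_ker W L1
      have hb := finrank_inf_ker (W ⊓ LinearMap.ker L1) L2
      rw [hW'def]
      omega
    have hp₀0 : p₀ ≠ 0 := by
      intro h
      rw [h, Bzero1 hf0 hC] at hB₀
      exact absurd hB₀ (by decide)
    have hcond : ∀ Z : Submodule (ZMod 2) (V n), Z ≤ W' → (∀ v ∈ Z, f v = 0) →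
        finrank (ZMod 2) Z + t + 3 ≤ finrank (ZMod 2) W' := by
      intro Z hZle hZ0
      have hp₀Z : p₀ ∉ Z := by
        intro h
        have h2 := (hmemW' p₀ (hZle h)).2.2
        rw [hB₀] at h2
        exact absurd h2 (by decide)
      have hZ'W : Z ⊔ Submodule.span (ZMod 2) {p₀} ≤ W :=
        sup_le (le_trans hZle hW'le) ((Submodule.span_singleton_le_iff_mem p₀ W).mpr hp₀W)
      have hZ'0 : ∀ v ∈ Z ⊔ Submodule.span (ZMod 2) {p₀}, f v = 0 := by
        intro v hv
        rw [Submodule.mem_sup] at hv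
        obtain ⟨z, hz, w, hw, rfl⟩ := hv
        rw [Submodule.mem_span_singleton] at hw
        obtain ⟨c, rfl⟩ := hw
        rcases z01 c with rfl | rfl
        · rw [zero_smul, add_zero]; exact hZ0 z hz
        · rw [one_smul, fadd hf0 hC, hZ0 z hz, hfp₀, (hmemW' z (hZle hz)).2.1]
          decide
      have hfr : finrank (ZMod 2) ↥(Z ⊔ Submodule.span (ZMod 2) {p₀})
          = finrank (ZMod 2) Z + 1 := finrank_sup_span_eq Z p₀ hp₀0 hp₀Z
      have := hW _ hZ'W hZ'0
      omega
    obtain ⟨p, q, hpW, hqW, hfp, hfq, hBpq, hBpp, hBqq⟩ := ih W' hcond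
    refine ⟨Fin.cons p₀ p, Fin.cons q₀ q, ?_, ?_, ?_, ?_, ?_, ?_, ?_⟩
    · intro i
      refine Fin.cases ?_ ?_ i
      · exact hp₀W
      · intro j; exact hW'le (hpW j)
    · intro i
      refine Fin.cases ?_ ?_ i
      · exact hq₀W
      · intro j; exact hW'le (hqW j)
    · intro i
      refine Fin.cases ?_ ?_ i
      · exact hfp₀
      · intro j; exact hfp j
    · intro i
      refine Fin.cases ?_ ?_ i
      · exact hfq₀
      · intro j; exact hfq j
    · intro i j
      refine Fin.cases ?_ ?_ i
      · refine Fin.cases ?_ ?_ j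
        · simpa using hB₀
        · intro j'
          have := (hmemW' (q j') (hqW j')).2.1
          rw [Fin.cons_zero, Fin.cons_succ, Bsym hf0 hC, this]
          simp [(Fin.succ_ne_zero j').symm]
      · intro i'
        refine Fin.cases ?_ ?_ j
        · have := (hmemW' (p i') (hpW i')).2.2
          rw [Fin.cons_succ, Fin.cons_zero, this]
          simp [Fin.succ_ne_zero i']
        · intro j'
          rw [Fin.cons_succ, Fin.cons_succ, hBpq i' j']
          simp [Fin.succ_inj]
    · intro i j
      revert j
      refine Fin.cases ?_ ?_ i
      · intro j
        refine Fin.cases ?_ ?_ j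
        · intro h; exact absurd rfl h
        · intro j' _
          rw [Fin.cons_zero, Fin.cons_succ, Bsym hf0 hC,
            (hmemW' (p j') (hpW j')).2.1]
      · intro i' j
        refine Fin.cases ?_ ?_ j
        · intro _
          rw [Fin.cons_succ, Fin.cons_zero, (hmemW' (p i') (hpW i')).2.1]
        · intro j' hij
          rw [Fin.cons_succ, Fin.cons_succ]
          exact hBpp i' j' (fun h => hij (by rw [h]))
    · intro i j
      revert j
      refine Fin.cases ?_ ?_ i
      · intro j
        refine Fin.cases ?_ ?_ j
        · intro h; exact absurd rfl h
        · intro j' _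
          rw [Fin.cons_zero, Fin.cons_succ, Bsym hf0 hC,
            (hmemW' (q j') (hqW j')).2.2]
      · intro i' j
        refine Fin.cases ?_ ?_ j
        · intro _
          rw [Fin.cons_succ, Fin.cons_zero, (hmemW' (q i') (hqW i')).2.2]
        · intro j' hij
          rw [Fin.cons_succ, Fin.cons_succ]
          exact hBqq i' j' (fun h => hij (by rw [h]))

end Pairs


lemma eq_iff_add {u v : V n} : u = v ↔ u + v = 0 := by
  constructor
  · rintro rfl; exact addself u
  · intro h
    have h2 : (u + v) + v = 0 + v := by rw [h]
    rwa [add_assoc, addself, add_zero, zero_add] at h2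



open Classical in
noncomputable def ind (E : Set (V n)) (v : V n) : ZMod 2 := if v ∈ E then 1 else 0

lemma ind_eq_one {E : Set (V n)} {v : V n} : ind E v = 1 ↔ v ∈ E := by
  by_cases h : v ∈ E <;> simp [ind, h]

lemma ind_eq_zero {E : Set (V n)} {v : V n} : ind E v = 0 ↔ v ∉ E := by
  by_cases h : v ∈ E <;> simp [ind, h]

lemma cube_of_even (E : Set (V n)) (h0 : 0 ∉ E)
    (hE : ∀ W : Submodule (ZMod 2) (V n), 3 ≤ finrank (ZMod 2) W →
      Even ((E ∩ ((W : Set (V n)) \ {0})).ncard))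
    (x y z : V n) :
    ind E (x+y+z) + ind E (x+y) + ind E (x+z) + ind E (y+z)
      + ind E x + ind E y + ind E z = 0 := by
  classical
  have i0 : ind E 0 = 0 := ind_eq_zero.mpr h0
  by_cases hx : x = 0
  · subst hx
    simp only [zero_add, i0]
    generalize ind E (y+z) = a; generalize ind E y = b; generalize ind E z = c
    revert a b c; decide
  by_cases hy : y = 0
  · subst hy
    simp only [add_zero, zero_add, i0]
    generalize ind E (x+z) = a; generalize ind E x = b; generalize ind E z = c
    revert a b c; decide
  by_cases hz : z = 0
  · subst hz
    simp only [add_zero, zero_add, i0]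
    generalize ind E (x+y) = a; generalize ind E x = b; generalize ind E y = c
    revert a b c; decide
  by_cases hxy : x + y = 0
  · have hexy : x = y := eq_iff_add.mpr hxy
    subst hexy
    have e1 : x + x + z = z := by linear_combination (addself x)
    rw [e1, addself, i0]
    generalize ind E (x+z) = a; generalize ind E x = b; generalize ind E z = c
    revert a b c; decide
  by_cases hxz : x + z = 0
  · have hexz : x = z := eq_iff_add.mpr hxz
    subst hexz
    have e1 : x + y + x = y := by linear_combination (addself x)
    have e2 : y + x = x + y := by ring
    rw [e1, e2, addself, i0]
    generalize ind E (x+y) = a; generalize ind E x = b; generalize ind E y = c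
    revert a b c; decide
  by_cases hyz : y + z = 0
  · have heyz : y = z := eq_iff_add.mpr hyz
    subst heyz
    have e1 : x + y + y = x := by linear_combination (addself y)
    rw [e1, addself, i0]
    generalize ind E (x+y) = a; generalize ind E x = b; generalize ind E y = c
    revert a b c; decide
  by_cases hxyz : x + y + z = 0
  · have hez : z = x + y := by rw [eq_iff_add]; linear_combination hxyz
    subst hez
    have e1 : x + y + (x + y) = 0 := addself _
    have e2 : x + (x + y) = y := by linear_combination (addself x)
    have e3 : y + (x + y) = x := by linear_combination (addself y)
    rw [e1, e2, e3, i0]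
    generalize ind E (x+y) = a; generalize ind E x = b; generalize ind E y = c
    revert a b c; decide
  -- main case: x, y, z linearly independent
  have hli : ∀ a b c : ZMod 2, a•x+b•y+c•z = 0 → a = 0 ∧ b = 0 ∧ c = 0 := by
    intro a b c h
    rcases z01 a with rfl | rfl <;> rcases z01 b with rfl | rfl <;>
      rcases z01 c with rfl | rfl <;>
      simp only [zero_smul, one_smul, add_zero, zero_add] at h <;>
      simp_all
  have hne : ∀ u v w : V n, u + v = w → w ≠ 0 → u ≠ v := by
    intro u v w he hw hc
    exact hw (by rw [← he]; exact eq_iff_add.mp hc)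
  -- the 21 distinctness facts
  have d1 : x ≠ y := hne _ _ _ rfl hxy
  have d2 : x ≠ z := hne _ _ _ rfl hxz
  have d3 : x ≠ x + y := hne _ _ y (by linear_combination (addself x)) hy
  have d4 : x ≠ x + z := hne _ _ z (by linear_combination (addself x)) hz
  have d5 : x ≠ y + z := hne _ _ (x+y+z) (by ring) hxyz
  have d6 : x ≠ x + y + z := hne _ _ (y+z) (by linear_combination (addself x)) hyz
  have d7 : y ≠ z := hne _ _ _ rfl hyz
  have d8 : y ≠ x + y := hne _ _ x (by linear_combination (addself y)) hx
  have d9 : y ≠ x + z := hne _ _ (x+y+z) (by ring) hxyz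
  have d10 : y ≠ y + z := hne _ _ z (by linear_combination (addself y)) hz
  have d11 : y ≠ x + y + z := hne _ _ (x+z) (by linear_combination (addself y)) hxz
  have d12 : z ≠ x + y := hne _ _ (x+y+z) (by ring) hxyz
  have d13 : z ≠ x + z := hne _ _ x (by linear_combination (addself z)) hx
  have d14 : z ≠ y + z := hne _ _ y (by linear_combination (addself z)) hy
  have d15 : z ≠ x + y + z := hne _ _ (x+y) (by linear_combination (addself z)) hxy
  have d16 : x + y ≠ x + z := hne _ _ (y+z) (by linear_combination (addself x)) hyz
  have d17 : x + y ≠ y + z := hne _ _ (x+z) (by linear_combination (addself y)) hxz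
  have d18 : x + y ≠ x + y + z := hne _ _ z (by linear_combination (addself (x+y))) hz
  have d19 : x + z ≠ y + z := hne _ _ (x+y) (by linear_combination (addself z)) hxy
  have d20 : x + z ≠ x + y + z := hne _ _ y (by linear_combination (addself (x+z))) hy
  have d21 : y + z ≠ x + y + z := hne _ _ x (by linear_combination (addself (y+z))) hx
  -- span has finrank 3
  have hLI : LinearIndependent (ZMod 2) ![x, y, z] := by
    rw [Fintype.linearIndependent_iff]
    intro g hg
    rw [Fin.sum_univ_three] at hg
    have := hli (g 0) (g 1) (g 2) (by simpa using hg)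
    intro i; fin_cases i <;> simp [this.1, this.2.1, this.2.2]
  have hspan : finrank (ZMod 2) ↥(Submodule.span (ZMod 2) {x, y, z}) = 3 := by
    have hr : Set.range ![x, y, z] = {x, y, z} := by
      ext v
      constructor
      · rintro ⟨i, rfl⟩; fin_cases i <;> simp
      · rintro (rfl | rfl | rfl)
        exacts [⟨0, rfl⟩, ⟨1, rfl⟩, ⟨2, rfl⟩]
    rw [← hr, finrank_span_eq_card hLI]
    simp
  -- the seven-element Finset
  set T : Finset (V n) := {x, y, z, x+y, x+z, y+z, x+y+z} with hT
  have hset : ((Submodule.span (ZMod 2) {x, y, z} : Submodule (ZMod 2) (V n)) : Set (V n))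
      \ {0} = ↑T := by
    ext v
    simp only [Set.mem_diff, Set.mem_singleton_iff, hT, Finset.coe_insert,
      Finset.coe_singleton, Set.mem_insert_iff, SetLike.mem_coe]
    constructor
    · rintro ⟨hv, hv0⟩
      rw [Submodule.mem_span_insert] at hv
      obtain ⟨a, w, hw, rfl⟩ := hv
      rw [Submodule.mem_span_insert] at hw
      obtain ⟨b, w', hw', rfl⟩ := hw
      rw [Submodule.mem_span_singleton] at hw'
      obtain ⟨c, rfl⟩ := hw'
      rcases z01 a with rfl | rfl <;> rcases z01 b with rfl | rfl <;>
        rcases z01 c with rfl | rfl <;>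
        simp only [zero_smul, one_smul, add_zero, zero_add] at hv0 ⊢
      · exact absurd trivial hv0
      · right; right; left; trivial
      · right; left; trivial
      · right; right; right; right; right; left; trivial
      · left; trivial
      · right; right; right; right; left; trivial
      · right; right; right; left; trivial
      · right; right; right; right; right; right; ring
    · have hxm : x ∈ Submodule.span (ZMod 2) ({x, y, z} : Set (V n)) :=
        Submodule.subset_span (by simp)
      have hym : y ∈ Submodule.span (ZMod 2) ({x, y, z} : Set (V n)) :=
        Submodule.subset_span (by simp)
      have hzm : z ∈ Submodule.span (ZMod 2) ({x, y, z} : Set (V n)) :=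
        Submodule.subset_span (by simp)
      rintro (rfl | rfl | rfl | rfl | rfl | rfl | rfl)
      · exact ⟨hxm, hx⟩
      · exact ⟨hym, hy⟩
      · exact ⟨hzm, hz⟩
      · exact ⟨add_mem hxm hym, hxy⟩
      · exact ⟨add_mem hxm hzm, hxz⟩
      · exact ⟨add_mem hym hzm, hyz⟩
      · exact ⟨add_mem (add_mem hxm hym) hzm, hxyz⟩
  have heven := hE (Submodule.span (ZMod 2) {x, y, z}) (by rw [hspan])
  rw [hset] at heven
  have hinter : E ∩ ↑T = ↑(T.filter (· ∈ E)) := by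
    ext v; simp [Finset.mem_filter, and_comm]
  rw [hinter, Set.ncard_coe_finset] at heven
  have hcast : (((T.filter (· ∈ E)).card : ℕ) : ZMod 2) = 0 := by
    rw [ZMod.natCast_eq_zero_iff]
    exact heven.two_dvd
  rw [Finset.card_filter, Nat.cast_sum] at hcast
  have hsum : ∑ v ∈ T, ind E v = 0 := by
    rw [← hcast]
    apply Finset.sum_congr rfl
    intro v _
    by_cases hv : v ∈ E <;> simp [ind, hv]
  rw [hT] at hsum
  have m1 : x ∉ ({y, z, x+y, x+z, y+z, x+y+z} : Finset (V n)) := by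
    simp only [Finset.mem_insert, Finset.mem_singleton]; push_neg
    exact ⟨d1, d2, d3, d4, d5, d6⟩
  have m2 : y ∉ ({z, x+y, x+z, y+z, x+y+z} : Finset (V n)) := by
    simp only [Finset.mem_insert, Finset.mem_singleton]; push_neg
    exact ⟨d7, d8, d9, d10, d11⟩
  have m3 : z ∉ ({x+y, x+z, y+z, x+y+z} : Finset (V n)) := by
    simp only [Finset.mem_insert, Finset.mem_singleton]; push_neg
    exact ⟨d12, d13, d14, d15⟩
  have m4 : x+y ∉ ({x+z, y+z, x+y+z} : Finset (V n)) := by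
    simp only [Finset.mem_insert, Finset.mem_singleton]; push_neg
    exact ⟨d16, d17, d18⟩
  have m5 : x+z ∉ ({y+z, x+y+z} : Finset (V n)) := by
    simp only [Finset.mem_insert, Finset.mem_singleton]; push_neg
    exact ⟨d19, d20⟩
  have m6 : y+z ∉ ({x+y+z} : Finset (V n)) := by
    simp only [Finset.mem_singleton]; exact d21
  rw [Finset.sum_insert m1, Finset.sum_insert m2, Finset.sum_insert m3,
    Finset.sum_insert m4, Finset.sum_insert m5, Finset.sum_insert m6,
    Finset.sum_singleton] at hsum
  linear_combination hsum


lemma embed {n m : ℕ} {f : V n → ZMod 2} {g : V m → ZMod 2}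
    (hf0 : f 0 = 0)
    (hCf : ∀ x y z : V n, f (x+y+z) + f (x+y) + f (x+z) + f (y+z) + f x + f y + f z = 0)
    (hg0 : g 0 = 0)
    (hCg : ∀ x y z : V m, g (x+y+z) + g (x+y) + g (x+z) + g (y+z) + g x + g y + g z = 0)
    (hz : ∀ Z : Submodule (ZMod 2) (V n), (∀ v ∈ Z, f v = 0) →
      Module.finrank (ZMod 2) Z + m + 3 ≤ n) :
    ∃ φ : V m →ₗ[ZMod 2] V n, Function.Injective φ ∧ ∀ u, f (φ u) = g u := by
  classical
  have htop : ∀ Z : Submodule (ZMod 2) (V n), Z ≤ ⊤ → (∀ v ∈ Z, f v = 0) →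
      Module.finrank (ZMod 2) Z + m + 3
        ≤ Module.finrank (ZMod 2) (⊤ : Submodule (ZMod 2) (V n)) := by
    intro Z _ h0
    have h1 := hz Z h0
    have he : Module.finrank (ZMod 2) (⊤ : Submodule (ZMod 2) (V n)) = n := by simp
    omega
  obtain ⟨p, q, _, _, hfp, hfq, hBpq, hBpp, hBqq⟩ := pairext hf0 hCf m ⊤ htop
  set δ : Fin m → V m := fun i => Pi.single i 1 with hδ
  set d : Fin m → Fin m → ZMod 2 :=
    fun l i => if l = i then g (δ i) else if l < i then B g (δ l) (δ i) else 0 with hd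
  set w : Fin m → V n := fun i => p i + ∑ l, d l i • q l with hw
  have hweq : ∀ i, w i = p i + ∑ l, d l i • q l := fun i => by simp only [hw]
  have hdii : ∀ i, d i i = g (δ i) := fun i => by simp only [hd, if_pos rfl]
  have hBwq : ∀ i j, B f (w i) (q j) = if i = j then 1 else 0 := by
    intro i j
    rw [hweq i, Badd1 hf0 hCf, Bsum1 hf0 hCf, hBpq i j]
    have hs : ∑ l, B f (d l i • q l) (q j) = 0 := by
      apply Finset.sum_eq_zero
      intro l _
      rw [Bsmul1 hf0 hCf]
      rcases eq_or_ne l j with rfl | hlj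
      · rw [Bself hf0 hCf]; ring
      · rw [hBqq l j hlj]; ring
    rw [hs, add_zero]
  have hfw : ∀ i, f (w i) = g (δ i) := by
    intro i
    rw [hweq i, fadd hf0 hCf, hfp i,
      fsum0 hf0 hCf Finset.univ q (fun l => d l i) hfq hBqq, Bsum2 hf0 hCf]
    have hs : ∑ l, B f (p i) (d l i • q l) = g (δ i) := by
      rw [Finset.sum_eq_single i]
      · rw [Bsmul2 hf0 hCf, hBpq i i, if_pos rfl, hdii]; ring
      · intro l _ hli
        rw [Bsmul2 hf0 hCf, hBpq i l, if_neg (fun h => hli h.symm)]; ring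
      · intro h; exact absurd (Finset.mem_univ i) h
    rw [hs]; ring
  have hBww : ∀ i j, i ≠ j → B f (w i) (w j) = B g (δ i) (δ j) := by
    intro i j hij
    have h1 : B f (p i) (w j) = d i j := by
      rw [hweq j, Badd2 hf0 hCf, hBpp i j hij, Bsum2 hf0 hCf]
      have hs : ∑ l, B f (p i) (d l j • q l) = d i j := by
        rw [Finset.sum_eq_single i]
        · rw [Bsmul2 hf0 hCf, hBpq i i, if_pos rfl]; ring
        · intro l _ hli
          rw [Bsmul2 hf0 hCf, hBpq i l, if_neg (fun h => hli h.symm)]; ring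
        · intro h; exact absurd (Finset.mem_univ i) h
      rw [hs, zero_add]
    have h2 : ∀ l, B f (q l) (w j) = if j = l then 1 else 0 := by
      intro l
      rw [hweq j, Badd2 hf0 hCf, Bsym hf0 hCf (q l) (p j), hBpq j l, Bsum2 hf0 hCf]
      have hs : ∑ l', B f (q l) (d l' j • q l') = 0 := by
        apply Finset.sum_eq_zero
        intro l' _
        rw [Bsmul2 hf0 hCf]
        rcases eq_or_ne l l' with rfl | hll
        · rw [Bself hf0 hCf]; ring
        · rw [hBqq l l' hll]; ring
      rw [hs, add_zero]
    have h3 : B f (w i) (w j) = d i j + d j i := by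
      rw [hweq i, Badd1 hf0 hCf, h1, Bsum1 hf0 hCf]
      have hs : ∑ l, B f (d l i • q l) (w j) = d j i := by
        rw [Finset.sum_eq_single j]
        · rw [Bsmul1 hf0 hCf, h2 j, if_pos rfl]; ring
        · intro l _ hlj
          rw [Bsmul1 hf0 hCf, h2 l, if_neg (fun h => hlj h.symm)]; ring
        · intro h; exact absurd (Finset.mem_univ j) h
      rw [hs]
    rw [h3]
    rcases lt_trichotomy i j with hlt | heq | hgt
    · simp only [hd]
      rw [if_neg hij, if_pos hlt, if_neg (fun h : j = i => hij h.symm),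
        if_neg (not_lt.mpr hlt.le)]
      ring
    · exact absurd heq hij
    · simp only [hd]
      rw [if_neg hij, if_neg (not_lt.mpr hgt.le), if_neg (fun h : j = i => hij h.symm),
        if_pos hgt, Bsym hg0 hCg]
      ring
  have hmain : ∀ s : Finset (Fin m), ∀ u : V m,
      f (∑ i ∈ s, u i • w i) = g (∑ i ∈ s, u i • δ i) := by
    intro s
    induction s using Finset.induction_on with
    | empty => intro u; simp only [Finset.sum_empty]; rw [hf0, hg0]
    | @insert a s ha ih =>
      intro u
      rw [Finset.sum_insert ha, Finset.sum_insert ha, fadd hf0 hCf, fadd hg0 hCg,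
        fsmul hf0 hCf, fsmul hg0 hCg, hfw a, ih u,
        Bsmul1 hf0 hCf, Bsmul1 hg0 hCg, Bsum2 hf0 hCf, Bsum2 hg0 hCg]
      have hs : ∑ i ∈ s, B f (w a) (u i • w i) = ∑ i ∈ s, B g (δ a) (u i • δ i) := by
        apply Finset.sum_congr rfl
        intro i hi
        rw [Bsmul2 hf0 hCf, Bsmul2 hg0 hCg, hBww a i (fun h => ha (h ▸ hi))]
      rw [hs]
  have hBφq : ∀ (u : V m) (j : Fin m), B f (∑ i, u i • w i) (q j) = u j := by
    intro u j
    rw [Bsum1 hf0 hCf]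
    rw [Finset.sum_eq_single j]
    · rw [Bsmul1 hf0 hCf, hBwq j j, if_pos rfl]; ring
    · intro l _ hlj
      rw [Bsmul1 hf0 hCf, hBwq l j, if_neg hlj]; ring
    · intro h; exact absurd (Finset.mem_univ j) h
  refine ⟨{ toFun := fun u => ∑ i, u i • w i
            map_add' := by
              intro u v
              simp [add_smul, Finset.sum_add_distrib]
            map_smul' := by
              intro c u
              simp [Finset.smul_sum, smul_smul] }, ?_, ?_⟩
  · intro u v huv
    have huv' : ∑ i, u i • w i = ∑ i, v i • w i := huv
    funext j
    rw [← hBφq u j, ← hBφq v j, huv']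
  · intro u
    show f (∑ i, u i • w i) = g u
    rw [hmain Finset.univ u]
    congr 1
    have hsingle : ∀ i : Fin m, u i • δ i = Pi.single i (u i) := by
      intro i
      simp only [hδ]
      rw [← Pi.single_smul, smul_eq_mul, mul_one]
    rw [Finset.sum_congr rfl (fun i _ => hsingle i), Finset.univ_sum_single]


end Stmt15Aux

/-- If `M` and `N` are matroids in `ℰ₃` and `χ(M) ≥ dim(N) + 4`, then
`M` contains `N` as an induced restriction. -/
theorem stmt15 (M N : BinMatroid) (hM : M.MemE 3) (hN : N.MemE 3)
    (hchi : N.dim + 4 ≤ M.critNum) :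
    M.HasIR N := by
  classical
  have hf0 : Stmt15Aux.ind M.E 0 = 0 := Stmt15Aux.ind_eq_zero.mpr M.zero_not_mem
  have hg0 : Stmt15Aux.ind N.E 0 = 0 := Stmt15Aux.ind_eq_zero.mpr N.zero_not_mem
  have hCf := Stmt15Aux.cube_of_even M.E M.zero_not_mem (fun W hW => hM W hW)
  have hCg := Stmt15Aux.cube_of_even N.E N.zero_not_mem (fun W hW => hN W hW)
  have hz : ∀ Z : Submodule (ZMod 2) (Fin M.dim → ZMod 2),
      (∀ v ∈ Z, Stmt15Aux.ind M.E v = 0) →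
      Module.finrank (ZMod 2) Z + N.dim + 3 ≤ M.dim := by
    intro Z hZ0
    have hfr : Module.finrank (ZMod 2) Z ≤ M.dim := by
      simpa using Submodule.finrank_le Z
    have hmem : (M.dim - Module.finrank (ZMod 2) Z) ∈
        {k : ℕ | ∃ W : Submodule (ZMod 2) (Fin M.dim → ZMod 2),
          Module.finrank (ZMod 2) W = M.dim - k ∧
          Disjoint ((W : Set (Fin M.dim → ZMod 2)) \ {0}) M.E} := by
      refine ⟨Z, by omega, ?_⟩
      rw [Set.disjoint_left]
      rintro v ⟨hvZ, _⟩ hvE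
      have hv := hZ0 v hvZ
      rw [Stmt15Aux.ind_eq_zero] at hv
      exact hv hvE
    have hle : M.critNum ≤ M.dim - Module.finrank (ZMod 2) Z := Nat.sInf_le hmem
    omega
  obtain ⟨φ, hinj, hkey⟩ := Stmt15Aux.embed hf0 hCf hg0 hCg hz
  refine ⟨φ, hinj, ?_⟩
  ext v
  constructor
  · rintro ⟨u, huE, rfl⟩
    have hgu : Stmt15Aux.ind N.E u = 1 := Stmt15Aux.ind_eq_one.mpr huE
    have hfv : Stmt15Aux.ind M.E (φ u) = 1 := by rw [hkey u, hgu]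
    refine ⟨Stmt15Aux.ind_eq_one.mp hfv, ⟨u, rfl⟩, ?_⟩
    intro h0
    rw [Set.mem_singleton_iff] at h0
    rw [h0, hf0] at hfv
    exact absurd hfv (by decide)
  · rintro ⟨hvE, ⟨u, rfl⟩, hv0⟩
    have hgu : Stmt15Aux.ind N.E u = 1 := by
      rw [← hkey u]; exact Stmt15Aux.ind_eq_one.mpr hvE
    exact ⟨u, Stmt15Aux.ind_eq_one.mp hgu, rfl⟩
end

section
/- Let M = (E, G) be a simple binary matroid such that no triangle of G is contained in E and M has no induced I₃-restriction. Then (E, cl(E)) is an affine geometry: either E = ∅, or there is a linear subspace W of span(E) with dim W = dim span(E) − 1 such that E = span(E) \ W. -/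
section Aux

private lemma zmod2_cases : ∀ c : ZMod 2, c = 0 ∨ c = 1 := by decide

private lemma add_self_zmod2 {n : ℕ} (x : Fin n → ZMod 2) : x + x = 0 := by
  ext i
  exact CharTwo.add_self_eq_zero _

private lemma add_eq_zero_iff_eq {n : ℕ} (x y : Fin n → ZMod 2) : x + y = 0 ↔ x = y := by
  constructor
  · intro h
    calc x = x + (y + y) := by rw [add_self_zmod2, add_zero]
    _ = (x + y) + y := by rw [add_assoc]
    _ = y := by rw [h, zero_add]
  · rintro rfl; exact add_self_zmod2 x

private lemma pair_not_mem {n : ℕ} {E : Set (Fin n → ZMod 2)}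
    (h0 : (0 : Fin n → ZMod 2) ∉ E)
    (htf : ∀ T : Set (Fin n → ZMod 2), IsTriangle T → ¬ T ⊆ E)
    {x y : Fin n → ZMod 2} (hx : x ∈ E) (hy : y ∈ E) (hxy : x ≠ y) : x + y ∉ E := by
  intro hmem
  have hx0 : x ≠ 0 := fun h => h0 (h ▸ hx)
  have hy0 : y ≠ 0 := fun h => h0 (h ▸ hy)
  have hxy0 : x + y ≠ 0 := fun h => hxy ((add_eq_zero_iff_eq x y).mp h)
  have h1 : x ≠ x + y := by
    intro h
    have h2 : x + x = x + (x + y) := congrArg (x + ·) h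
    rw [add_self_zmod2, ← add_assoc, add_self_zmod2, zero_add] at h2
    exact hy0 h2.symm
  have h2 : y ≠ x + y := by
    intro h
    have h2 : y + y = y + (x + y) := congrArg (y + ·) h
    rw [add_self_zmod2, add_comm x y, ← add_assoc, add_self_zmod2, zero_add] at h2
    exact hx0 h2.symm
  refine htf {x, y, x + y} ⟨x, y, x + y, hx0, hy0, hxy0, hxy, h1, h2,
    add_self_zmod2 (x + y), rfl⟩ ?_
  rintro a (rfl | rfl | rfl)
  · exact hx
  · exact hy
  · exact hmem

/-- The linear map sending the standard basis of `𝔽₂³` to `x, y, z`. -/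
private def lmap3 {n : ℕ} (x y z : Fin n → ZMod 2) :
    (Fin 3 → ZMod 2) →ₗ[ZMod 2] (Fin n → ZMod 2) where
  toFun v := v 0 • x + v 1 • y + v 2 • z
  map_add' u v := by
    simp only [Pi.add_apply, add_smul]
    abel
  map_smul' c v := by
    simp only [Pi.smul_apply, smul_eq_mul, mul_smul, RingHom.id_apply, smul_add]

private lemma lmap3_apply {n : ℕ} (x y z : Fin n → ZMod 2) (v : Fin 3 → ZMod 2) :
    lmap3 x y z v = v 0 • x + v 1 • y + v 2 • z := rfl

private lemma triple_mem (M : BinMatroid)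
    (htf : ∀ T : Set (Fin M.dim → ZMod 2), IsTriangle T → ¬ T ⊆ M.E)
    (hI3 : ¬ M.HasIR I3)
    {x y z : Fin M.dim → ZMod 2} (hx : x ∈ M.E) (hy : y ∈ M.E) (hz : z ∈ M.E) :
    x + y + z ∈ M.E := by
  have h0 := M.zero_not_mem
  by_cases hxy : x = y
  · subst hxy; rw [add_self_zmod2, zero_add]; exact hz
  by_cases hxz : x = z
  · subst hxz
    rw [show x + y + x = (x + x) + y from by abel, add_self_zmod2, zero_add]
    exact hy
  by_cases hyz : y = z
  · subst hyz; rw [add_assoc, add_self_zmod2, add_zero]; exact hx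
  -- x, y, z distinct
  have hx0 : x ≠ 0 := fun h => h0 (h ▸ hx)
  have hy0 : y ≠ 0 := fun h => h0 (h ▸ hy)
  have hz0 : z ≠ 0 := fun h => h0 (h ▸ hz)
  have hxyE : x + y ∉ M.E := pair_not_mem h0 htf hx hy hxy
  have hxzE : x + z ∉ M.E := pair_not_mem h0 htf hx hz hxz
  have hyzE : y + z ∉ M.E := pair_not_mem h0 htf hy hz hyz
  have hxy0 : x + y ≠ 0 := fun h => hxy ((add_eq_zero_iff_eq x y).mp h)
  have hxz0 : x + z ≠ 0 := fun h => hxz ((add_eq_zero_iff_eq x z).mp h)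
  have hyz0 : y + z ≠ 0 := fun h => hyz ((add_eq_zero_iff_eq y z).mp h)
  by_cases hs : x + y + z ∈ M.E
  · exact hs
  exfalso
  have hs0 : x + y + z ≠ 0 := by
    intro h
    have h' : x + y = z := (add_eq_zero_iff_eq _ _).mp h
    exact hxyE (by rw [h']; exact hz)
  have hior : ∀ i : Fin 3, i = 0 ∨ i = 1 ∨ i = 2 := by decide
  have hinj : Function.Injective (lmap3 x y z) := by
    rw [← LinearMap.ker_eq_bot, LinearMap.ker_eq_bot']
    intro v hv
    rw [lmap3_apply] at hv
    rcases zmod2_cases (v 0) with h₀ | h₀ <;> rcases zmod2_cases (v 1) with h₁ | h₁ <;>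
      rcases zmod2_cases (v 2) with h₂ | h₂ <;>
      rw [h₀, h₁, h₂] at hv <;>
      simp only [zero_smul, one_smul, zero_add, add_zero] at hv
    · funext i
      rcases hior i with rfl | rfl | rfl
      · exact h₀
      · exact h₁
      · exact h₂
    · exact absurd hv hz0
    · exact absurd hv hy0
    · exact absurd hv hyz0
    · exact absurd hv hx0
    · exact absurd hv hxz0
    · exact absurd hv hxy0
    · exact absurd hv hs0
  have hφ0 : lmap3 x y z (Pi.single 0 1) = x := by
    rw [lmap3_apply]
    simp [Pi.single_apply]
  have hφ1 : lmap3 x y z (Pi.single 1 1) = y := by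
    rw [lmap3_apply]
    simp [Pi.single_apply]
  have hφ2 : lmap3 x y z (Pi.single 2 1) = z := by
    rw [lmap3_apply]
    simp [Pi.single_apply]
  have himg : (lmap3 x y z) '' (Set.range fun i : Fin 3 => (Pi.single i 1 : Fin 3 → ZMod 2))
      = M.E ∩ (Set.range (lmap3 x y z) \ {0}) := by
    apply Set.Subset.antisymm
    · rintro w ⟨u, hu, rfl⟩
      obtain ⟨i, rfl⟩ := hu
      rcases hior i with rfl | rfl | rfl
      · exact ⟨by rw [hφ0]; exact hx, ⟨_, rfl⟩,
          by simp only [Set.mem_singleton_iff, hφ0]; exact hx0⟩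
      · exact ⟨by rw [hφ1]; exact hy, ⟨_, rfl⟩,
          by simp only [Set.mem_singleton_iff, hφ1]; exact hy0⟩
      · exact ⟨by rw [hφ2]; exact hz, ⟨_, rfl⟩,
          by simp only [Set.mem_singleton_iff, hφ2]; exact hz0⟩
    · rintro w ⟨hwE, ⟨v, rfl⟩, -⟩
      have hval := lmap3_apply x y z v
      rcases zmod2_cases (v 0) with h₀ | h₀ <;> rcases zmod2_cases (v 1) with h₁ | h₁ <;>
        rcases zmod2_cases (v 2) with h₂ | h₂ <;>
        rw [h₀, h₁, h₂] at hval <;>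
        simp only [zero_smul, one_smul, zero_add, add_zero] at hval
      · exact absurd (hval ▸ hwE) h0
      · exact ⟨Pi.single 2 1, ⟨2, rfl⟩, by rw [hφ2, hval]⟩
      · exact ⟨Pi.single 1 1, ⟨1, rfl⟩, by rw [hφ1, hval]⟩
      · exact absurd (hval ▸ hwE) hyzE
      · exact ⟨Pi.single 0 1, ⟨0, rfl⟩, by rw [hφ0, hval]⟩
      · exact absurd (hval ▸ hwE) hxzE
      · exact absurd (hval ▸ hwE) hxyE
      · exact absurd (hval ▸ hwE) hs
  exact hI3 ⟨lmap3 x y z, hinj, himg⟩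

end Aux

/-- If `M = (E, G)` is triangle-free and has no induced
`I₃`-restriction, then `(E, cl(E))` is an affine geometry: either `E = ∅`, or there is a
subspace `W` of `span(E)` of codimension 1 with `E = span(E) \ W`. -/
theorem stmt16 (M : BinMatroid)
    (htf : ∀ T : Set (Fin M.dim → ZMod 2), IsTriangle T → ¬ T ⊆ M.E)
    (hI3 : ¬ M.HasIR I3) :
    M.E = ∅ ∨ ∃ W : Submodule (ZMod 2) (Fin M.dim → ZMod 2),
      W ≤ Submodule.span (ZMod 2) M.E ∧
      Module.finrank (ZMod 2) W + 1 =
        Module.finrank (ZMod 2) (Submodule.span (ZMod 2) M.E) ∧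
      M.E = (Submodule.span (ZMod 2) M.E : Set (Fin M.dim → ZMod 2)) \
        (W : Set (Fin M.dim → ZMod 2)) := by
  rcases Set.eq_empty_or_nonempty M.E with hE | ⟨e, he⟩
  · exact Or.inl hE
  right
  have h0 := M.zero_not_mem
  have he0 : e ≠ 0 := fun h => h0 (h ▸ he)
  have triple : ∀ {a b c : Fin M.dim → ZMod 2}, a ∈ M.E → b ∈ M.E → c ∈ M.E →
      a + b + c ∈ M.E := fun ha hb hc => triple_mem M htf hI3 ha hb hc
  let W : Submodule (ZMod 2) (Fin M.dim → ZMod 2) :=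
    { carrier := {v | e + v ∈ M.E}
      zero_mem' := by simpa using he
      add_mem' := by
        intro a b ha hb
        have hmem := triple ha hb he
        have heq : (e + a) + (e + b) + e = e + (a + b) := by
          calc (e + a) + (e + b) + e = (e + e) + (e + (a + b)) := by abel
          _ = e + (a + b) := by rw [add_self_zmod2, zero_add]
        show e + (a + b) ∈ M.E
        exact heq ▸ hmem
      smul_mem' := by
        intro c v hv
        rcases zmod2_cases c with rfl | rfl
        · simpa using he
        · simpa using hv }
  have hmemW : ∀ v, v ∈ W ↔ e + v ∈ M.E := fun v => Iff.rfl
  have heq2 : ∀ u : Fin M.dim → ZMod 2, e + (e + u) = u := fun u => by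
    rw [← add_assoc, add_self_zmod2, zero_add]
  have heW : e ∉ W := by
    intro h
    rw [hmemW, add_self_zmod2] at h
    exact h0 h
  have hEW : ∀ u, (e + u ∈ W) ↔ u ∈ M.E := fun u => by rw [hmemW, heq2 u]
  have hWle : W ≤ Submodule.span (ZMod 2) M.E := by
    intro v hv
    rw [hmemW] at hv
    have h1 : e ∈ Submodule.span (ZMod 2) M.E := Submodule.subset_span he
    have h2 : e + v ∈ Submodule.span (ZMod 2) M.E := Submodule.subset_span hv
    exact heq2 v ▸ Submodule.add_mem _ h1 h2
  have hspan : Submodule.span (ZMod 2) M.E = W ⊔ Submodule.span (ZMod 2) {e} := by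
    apply le_antisymm
    · rw [Submodule.span_le]
      intro u hu
      have h1 : e + u ∈ W := (hEW u).mpr hu
      have h2 : (e + u) + e = u := by
        rw [add_comm e u, add_assoc, add_self_zmod2, add_zero]
      exact h2 ▸ Submodule.add_mem _ (Submodule.mem_sup_left h1)
        (Submodule.mem_sup_right (Submodule.mem_span_singleton_self e))
    · exact sup_le hWle (Submodule.span_mono (Set.singleton_subset_iff.mpr he))
  have hinf : W ⊓ Submodule.span (ZMod 2) {e} = ⊥ := by
    rw [eq_bot_iff]
    intro v hv
    rw [Submodule.mem_inf] at hv
    obtain ⟨hvW, hve⟩ := hv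
    rw [Submodule.mem_span_singleton] at hve
    obtain ⟨c, rfl⟩ := hve
    rcases zmod2_cases c with rfl | rfl
    · simp
    · rw [one_smul] at hvW
      exact absurd hvW heW
  refine ⟨W, hWle, ?_, ?_⟩
  · have hfr := Submodule.finrank_sup_add_finrank_inf_eq W (Submodule.span (ZMod 2) {e})
    rw [hinf, finrank_span_singleton he0, finrank_bot] at hfr
    rw [hspan]
    omega
  · ext u
    simp only [Set.mem_diff, SetLike.mem_coe]
    constructor
    · intro hu
      refine ⟨Submodule.subset_span hu, ?_⟩
      intro huW
      rw [hmemW] at huW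
      by_cases h : u = e
      · rw [h, add_self_zmod2] at huW
        exact h0 huW
      · exact pair_not_mem h0 htf he hu (fun hh => h hh.symm) huW
    · rintro ⟨husp, huW⟩
      rw [hspan, Submodule.mem_sup] at husp
      obtain ⟨w, hw, zz, hz, rfl⟩ := husp
      rw [Submodule.mem_span_singleton] at hz
      obtain ⟨c, rfl⟩ := hz
      rcases zmod2_cases c with rfl | rfl
      · exfalso
        apply huW
        simpa using hw
      · rw [one_smul]
        have h1 : e + (w + e) = w := by
          calc e + (w + e) = (e + e) + w := by abel
          _ = w := by rw [add_self_zmod2, zero_add]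
        exact (hEW (w + e)).mp (by rw [h1]; exact hw)
end

section
/- Let M = (E, G) be an n-dimensional matroid with an AG(n−1, 2)-restriction, i.e., G − H ⊆ E for some hyperplane H of G. If M contains neither F₇ nor I₃ as an induced restriction, then either M is isomorphic to AG(n−1, 2), or there exists s ≥ 2 such that M arises from AG°(s−1, 2) by a sequence of doublings. -/
/-!
If `E` misses `H`, then `M` is `AG(n−1, 2)`. Otherwise fix `x₀ ∈ E ∩ H`. Excluding `F₇` forbids
a triangle with two points in `E ∩ H` (together with a point off `H` it would span a Fano plane
inside `E`); excluding `I₃` then forces `x + y + z ∈ E` for distinct `x, y, z ∈ E ∩ H`. Hence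
`W = {u ∈ H | x₀ + u ∈ E}` is a subspace not containing `x₀`, and `E = (G − H) ∪ (x₀ + W)`.
Such a set is the doubling, by any nonzero `w ∈ W`, of its restriction to a hyperplane through
`x₀` avoiding `w`, and that restriction has the same shape with `dim W` one smaller; for `W = 0`
it is `AG°`.
-/

open Module Submodule

lemma ZMod.eq_zero_or_eq_one (a : ZMod 2) : a = 0 ∨ a = 1 := by
  revert a; decide

namespace ZModModule

variable {V : Type*} [AddCommGroup V] [Module (ZMod 2) V]

lemma smul_eq_zero_or_self (a : ZMod 2) (x : V) : a • x = 0 ∨ a • x = x := by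
  rcases ZMod.eq_zero_or_eq_one a with rfl | rfl <;> simp

lemma add_add_cancel_left (x v : V) : x + (x + v) = v := by
  rw [← add_assoc, add_self, zero_add]

lemma add_eq_zero_iff_eq {x v : V} : x + v = 0 ↔ x = v := by
  rw [add_eq_zero_iff_eq_neg, neg_eq_self]

lemma mem_span_pair_iff {x y v : V} :
    v ∈ span (ZMod 2) {x, y} ↔ v = 0 ∨ v = x ∨ v = y ∨ v = x + y := by
  constructor
  · rw [mem_span_pair]
    rintro ⟨a, b, rfl⟩
    rcases smul_eq_zero_or_self a x with ha | ha <;>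
      rcases smul_eq_zero_or_self b y with hb | hb <;> simp [ha, hb]
  · rintro (rfl | rfl | rfl | rfl)
    · exact zero_mem _
    · exact subset_span (by simp)
    · exact subset_span (by simp)
    · exact add_mem (subset_span (by simp)) (subset_span (by simp))

lemma mem_span_insert_iff {x v : V} {s : Set V} :
    v ∈ span (ZMod 2) (insert x s) ↔ v ∈ span (ZMod 2) s ∨ x + v ∈ span (ZMod 2) s := by
  rw [mem_span_insert]
  constructor
  · rintro ⟨a, u, hu, rfl⟩
    rcases smul_eq_zero_or_self a x with ha | ha
    · left; simpa [ha] using hu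
    · right; rwa [ha, add_add_cancel_left]
  · rintro (hv | hv)
    · exact ⟨0, v, hv, by simp⟩
    · exact ⟨1, x + v, hv, by simp [add_add_cancel_left]⟩

lemma linearIndependent_of_notMem_span_pair {x y z : V} (hy : y ≠ 0) (hyz : y ≠ z)
    (hz : z ≠ 0) (hx : x ∉ span (ZMod 2) {y, z}) : LinearIndependent (ZMod 2) ![x, y, z] := by
  refine linearIndependent_finCons.mpr ⟨(LinearIndependent.pair_iff' hy).mpr fun a => ?_, ?_⟩
  · rcases smul_eq_zero_or_self a y with ha | ha <;> rw [ha]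
    exacts [hz.symm, hyz]
  · rwa [Matrix.range_cons_cons_empty]

end ZModModule

section Finrank

variable {K U V : Type*} [Field K] [AddCommGroup U] [Module K U] [AddCommGroup V] [Module K V]

lemma Submodule.finrank_comap_of_injective {φ : U →ₗ[K] V} (hφ : Function.Injective φ)
    (P : Submodule K V) : finrank K (P.comap φ) = finrank K ↥(P ⊓ LinearMap.range φ) := by
  rw [((P.comap φ).equivMapOfInjective φ hφ).finrank_eq, map_comap_eq, inf_comm]

lemma Submodule.finrank_inf_ker_add_one [FiniteDimensional K V] {f : V →ₗ[K] K}
    {P : Submodule K V} {p : V} (hp : p ∈ P) (hfp : f p ≠ 0) :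
    finrank K ↥(P ⊓ LinearMap.ker f) + 1 = finrank K P := by
  have hf : f.domRestrict P ≠ 0 := fun h => hfp (by simpa using LinearMap.congr_fun h ⟨p, hp⟩)
  rw [← Module.Dual.finrank_ker_add_one_of_ne_zero hf, LinearMap.ker_domRestrict,
    finrank_comap_of_injective P.injective_subtype, range_subtype, inf_comm]

lemma LinearMap.exists_injective_range_eq_ker {m : ℕ}
    {f : (Fin (m + 1) → K) →ₗ[K] K} (hf : f ≠ 0) :
    ∃ φ : (Fin m → K) →ₗ[K] (Fin (m + 1) → K),
      Function.Injective φ ∧ LinearMap.range φ = LinearMap.ker f := by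
  have hK : finrank K (Fin m → K) = finrank K (LinearMap.ker f) := by
    have := Module.Dual.finrank_ker_add_one_of_ne_zero hf
    simp only [finrank_fin_fun] at this ⊢
    omega
  let ψ := LinearEquiv.ofFinrankEq _ _ hK
  refine ⟨(LinearMap.ker f).subtype ∘ₗ ψ.toLinearMap,
    (LinearMap.ker f).injective_subtype.comp ψ.injective, ?_⟩
  rw [LinearMap.range_comp, LinearEquiv.range, Submodule.map_top, range_subtype]

end Finrank

section AGUnionCoset

variable {V : Type*} [AddCommGroup V] [Module (ZMod 2) V] {H W : Submodule (ZMod 2) V} {x₀ v : V}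

/-- The set `(G − H) ∪ (x₀ + W)`, written with `x₀ + v ∈ W` since `-x₀ = x₀`. -/
def agUnionCoset (H W : Submodule (ZMod 2) V) (x₀ : V) : Set V :=
  {v | v ≠ 0 ∧ (v ∉ H ∨ x₀ + v ∈ W)}

lemma mem_agUnionCoset_iff (hx₀W : x₀ ∉ W) : v ∈ agUnionCoset H W x₀ ↔ v ∉ H ∨ x₀ + v ∈ W := by
  refine ⟨And.right, fun hv => ⟨?_, hv⟩⟩
  rintro rfl
  simp_all

lemma add_mem_agUnionCoset_iff (hx₀W : x₀ ∉ W) {w : V} (hwH : w ∈ H) (hwW : w ∈ W) :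
    w + v ∈ agUnionCoset H W x₀ ↔ v ∈ agUnionCoset H W x₀ := by
  rw [mem_agUnionCoset_iff hx₀W, mem_agUnionCoset_iff hx₀W, H.add_mem_iff_right hwH,
    add_left_comm, W.add_mem_iff_right hwW]

lemma preimage_agUnionCoset {U : Type*} [AddCommGroup U] [Module (ZMod 2) U]
    {φ : U →ₗ[ZMod 2] V} (hφ : Function.Injective φ) (x₀ : U) :
    φ ⁻¹' agUnionCoset H W (φ x₀) = agUnionCoset (H.comap φ) (W.comap φ) x₀ := by
  ext u
  simp [agUnionCoset, map_ne_zero_iff φ hφ]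

lemma agUnionCoset_bot (hx₀ : x₀ ≠ 0) :
    agUnionCoset H ⊥ x₀ = ({v | v ≠ 0} \ (H : Set V)) ∪ {x₀} := by
  ext v
  simp only [agUnionCoset, mem_bot, ZModModule.add_eq_zero_iff_eq, Set.mem_ofPred_eq,
    Set.mem_union, Set.mem_sdiff, SetLike.mem_coe, Set.mem_singleton_iff]
  constructor
  · rintro ⟨hv, hvH | rfl⟩
    exacts [Or.inl ⟨hv, hvH⟩, Or.inr rfl]
  · rintro (⟨hv, hvH⟩ | rfl)
    exacts [⟨hv, Or.inl hvH⟩, ⟨hx₀, Or.inr rfl⟩]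

end AGUnionCoset

namespace BinMatroid

section AGRestriction

variable {M : BinMatroid} {H : Submodule (ZMod 2) (Fin M.dim → ZMod 2)}

lemma hasIR_F7_of_linearIndependent {v : Fin 3 → Fin M.dim → ZMod 2}
    (hv : LinearIndependent (ZMod 2) v)
    (hE : ∀ u ∈ span (ZMod 2) (Set.range v), u ≠ 0 → u ∈ M.E) : M.HasIR F7 := by
  have hinj := linearIndependent_iff_injective_fintypeLinearCombination.mp hv
  suffices h : Fintype.linearCombination (ZMod 2) v '' {u | u ≠ 0} =
      M.E ∩ (Set.range (Fintype.linearCombination (ZMod 2) v) \ {0}) from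
    ⟨_, hinj, h⟩
  rw [show {u : Fin 3 → ZMod 2 | u ≠ 0} = Set.univ \ {0} by ext; simp, Set.image_sdiff hinj,
    Set.image_univ, Set.image_singleton, map_zero, ← LinearMap.coe_range,
    Fintype.range_linearCombination]
  exact (Set.inter_eq_right.mpr fun u hu => hE u hu.1 hu.2).symm

lemma hasIR_I3_of_linearIndependent {v : Fin 3 → Fin M.dim → ZMod 2}
    (hv : LinearIndependent (ZMod 2) v)
    (hE : M.E ∩ (span (ZMod 2) (Set.range v) \ {0}) = Set.range v) : M.HasIR I3 := by
  have hinj := linearIndependent_iff_injective_fintypeLinearCombination.mp hv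
  suffices h : Fintype.linearCombination (ZMod 2) v '' Set.range (fun i => Pi.single i 1) =
      M.E ∩ (Set.range (Fintype.linearCombination (ZMod 2) v) \ {0}) from
    ⟨_, hinj, h⟩
  rw [← LinearMap.coe_range, Fintype.range_linearCombination, hE, ← Set.range_comp]
  congr 1
  ext i
  simp

variable (hH : H ≠ ⊤)
  (hAG : {v : Fin M.dim → ZMod 2 | v ≠ 0} \ (H : Set (Fin M.dim → ZMod 2)) ⊆ M.E)
  (hF7 : ¬ M.HasIR F7)
include hH hAG hF7

lemma add_notMem_of_not_hasIR_F7 {x y : Fin M.dim → ZMod 2} (hx : x ∈ M.E) (hxH : x ∈ H)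
    (hy : y ∈ M.E) (hyH : y ∈ H) (hxy : x ≠ y) : x + y ∉ M.E := by
  intro hxyE
  obtain ⟨a, ha⟩ := SetLike.exists_not_mem_of_ne_top H hH
  have hspan : span (ZMod 2) {x, y} ≤ H := span_le.mpr (Set.insert_subset hxH (by simpa))
  have hli := ZModModule.linearIndependent_of_notMem_span_pair
    (ne_of_mem_of_not_mem hx M.zero_not_mem) hxy (ne_of_mem_of_not_mem hy M.zero_not_mem)
    fun h => ha (hspan h)
  refine hF7 (hasIR_F7_of_linearIndependent hli fun u hu hu0 => ?_)
  rw [Matrix.range_cons, Matrix.range_cons_cons_empty, Set.singleton_union] at hu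
  rcases ZModModule.mem_span_insert_iff.mp hu with hu | hu
  · rcases ZModModule.mem_span_pair_iff.mp hu with rfl | rfl | rfl | rfl
    exacts [(hu0 rfl).elim, hx, hy, hxyE]
  · exact hAG ⟨hu0, fun huH => ha ((H.add_mem_iff_left huH).mp (hspan hu))⟩

variable (hI3 : ¬ M.HasIR I3)
include hI3

lemma add_add_mem_of_not_hasIR {x y z : Fin M.dim → ZMod 2} (hx : x ∈ M.E) (hxH : x ∈ H)
    (hy : y ∈ M.E) (hyH : y ∈ H) (hz : z ∈ M.E) (hzH : z ∈ H) (hxy : x ≠ y) (hxz : x ≠ z)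
    (hyz : y ≠ z) (hxyz : x + y + z ≠ 0) : x + y + z ∈ M.E := by
  by_contra hxyzE
  have hx0 := ne_of_mem_of_not_mem hx M.zero_not_mem
  have hy0 := ne_of_mem_of_not_mem hy M.zero_not_mem
  have hz0 := ne_of_mem_of_not_mem hz M.zero_not_mem
  have hx_span : x ∉ span (ZMod 2) {y, z} := by
    rw [ZModModule.mem_span_pair_iff]
    rintro (rfl | rfl | rfl | rfl)
    exacts [hx0 rfl, hxy rfl, hxz rfl, hxyz (by rw [add_assoc, ZModModule.add_self])]
  refine hI3 (hasIR_I3_of_linearIndependent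
    (ZModModule.linearIndependent_of_notMem_span_pair hy0 hyz hz0 hx_span) ?_)
  rw [Matrix.range_cons, Matrix.range_cons_cons_empty, Set.singleton_union]
  ext u
  constructor
  · rintro ⟨huE, hu, hu0⟩
    have hxu := ZModModule.add_add_cancel_left x u
    rcases ZModModule.mem_span_insert_iff.mp hu with h | h <;>
      rcases ZModModule.mem_span_pair_iff.mp h with h | h | h | h
    · exact (hu0 h).elim
    · exact Or.inr (Or.inl h)
    · exact Or.inr (Or.inr h)
    · exact (add_notMem_of_not_hasIR_F7 hH hAG hF7 hy hyH hz hzH hyz (h ▸ huE)).elim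
    · exact Or.inl (ZModModule.add_eq_zero_iff_eq.mp h).symm
    · exact (add_notMem_of_not_hasIR_F7 hH hAG hF7 hx hxH hy hyH hxy (by rwa [← h, hxu])).elim
    · exact (add_notMem_of_not_hasIR_F7 hH hAG hF7 hx hxH hz hzH hxz (by rwa [← h, hxu])).elim
    · exact (hxyzE (by rw [add_assoc, ← h, hxu]; exact huE)).elim
  · rintro (rfl | rfl | rfl)
    · exact ⟨hx, subset_span (by simp), hx0⟩
    · exact ⟨hy, subset_span (by simp), hy0⟩
    · exact ⟨hz, subset_span (by simp), hz0⟩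

lemma add_mem_of_not_hasIR {x₀ u v : Fin M.dim → ZMod 2} (hx₀ : x₀ ∈ M.E) (hx₀H : x₀ ∈ H)
    (hu : x₀ + u ∈ M.E) (huH : u ∈ H) (hv : x₀ + v ∈ M.E) (hvH : v ∈ H) :
    x₀ + (u + v) ∈ M.E := by
  by_cases hu0 : u = 0
  · simpa [hu0] using hv
  by_cases hv0 : v = 0
  · simpa [hv0] using hu
  by_cases huv : u = v
  · simpa [huv, ZModModule.add_self] using hx₀
  have hsum : (x₀ + u) + (x₀ + v) = u + v := by
    rw [add_comm x₀ u, ZModModule.add_add_add_cancel]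
  have hxuH := H.add_mem hx₀H huH
  have hxvH := H.add_mem hx₀H hvH
  have hsum0 : (x₀ + u) + (x₀ + v) + x₀ ≠ 0 := by
    rw [hsum]
    intro h
    rw [ZModModule.add_eq_zero_iff_eq] at h
    exact add_notMem_of_not_hasIR_F7 hH hAG hF7 hu hxuH hv hxvH
      (fun h => huv (add_left_cancel h)) (hsum ▸ h ▸ hx₀)
  have := add_add_mem_of_not_hasIR hH hAG hF7 hI3 hu hxuH hv hxvH hx₀ hx₀H
    (fun h => huv (add_left_cancel h)) (fun h => hu0 (by simpa using h))
    (fun h => hv0 (by simpa using h)) hsum0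
  rwa [hsum, add_comm] at this

lemma exists_eq_agUnionCoset {x₀ : Fin M.dim → ZMod 2} (hx₀ : x₀ ∈ M.E) (hx₀H : x₀ ∈ H) :
    ∃ W : Submodule (ZMod 2) (Fin M.dim → ZMod 2), W ≤ H ∧ x₀ ∉ W ∧
      M.E = agUnionCoset H W x₀ := by
  let W : Submodule (ZMod 2) (Fin M.dim → ZMod 2) :=
    { carrier := {u | x₀ + u ∈ M.E ∧ u ∈ H}
      zero_mem' := ⟨by simpa using hx₀, H.zero_mem⟩
      add_mem' := fun hu hv => ⟨add_mem_of_not_hasIR hH hAG hF7 hI3 hx₀ hx₀H hu.1 hu.2 hv.1 hv.2,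
        H.add_mem hu.2 hv.2⟩
      smul_mem' := fun a u hu => by
        rcases ZModModule.smul_eq_zero_or_self a u with h | h <;> rw [h]
        exacts [⟨by simpa using hx₀, H.zero_mem⟩, hu] }
  have hx₀W : x₀ ∉ W := fun h => M.zero_not_mem (ZModModule.add_self x₀ ▸ h.1)
  refine ⟨W, fun u hu => hu.2, hx₀W, Set.ext fun v => ?_⟩
  rw [mem_agUnionCoset_iff hx₀W]
  change v ∈ M.E ↔ v ∉ H ∨ x₀ + (x₀ + v) ∈ M.E ∧ x₀ + v ∈ H
  rw [ZModModule.add_add_cancel_left, H.add_mem_iff_right hx₀H]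
  by_cases hvH : v ∈ H
  · simp [hvH]
  · exact iff_of_true (hAG ⟨fun h => hvH (h ▸ H.zero_mem), hvH⟩) (Or.inl hvH)

end AGRestriction

def agUnionCosetMatroid {n : ℕ} (H W : Submodule (ZMod 2) (Fin n → ZMod 2))
    (x₀ : Fin n → ZMod 2) : BinMatroid :=
  ⟨n, agUnionCoset H W x₀, fun h => h.1 rfl⟩

lemma iso_agUnionCosetMatroid {M : BinMatroid} {H W : Submodule (ZMod 2) (Fin M.dim → ZMod 2)}
    {x₀ : Fin M.dim → ZMod 2} (hE : M.E = agUnionCoset H W x₀) :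
    M.Iso (agUnionCosetMatroid H W x₀) := by
  refine ⟨LinearMap.id, Function.bijective_id, ?_⟩
  change id '' agUnionCoset H W x₀ = M.E ∩ (Set.range id \ {0})
  rw [Set.image_id, Set.range_id, ← hE]
  exact (Set.inter_eq_left.mpr fun v hv =>
    Set.mem_sdiff_singleton.mpr ⟨Set.mem_univ v, ne_of_mem_of_not_mem hv M.zero_not_mem⟩).symm

lemma isDoublingOf_of_preimage {M M₀ : BinMatroid} (hdim : M.dim = M₀.dim + 1)
    {φ : (Fin M₀.dim → ZMod 2) →ₗ[ZMod 2] (Fin M.dim → ZMod 2)} (hφ : Function.Injective φ)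
    (hE₀ : M₀.E = φ ⁻¹' M.E) {w : Fin M.dim → ZMod 2} (hwφ : w ∉ Set.range φ) (hwE : w ∉ M.E)
    (hcover : ∀ v, v ∈ Set.range φ ∨ w + v ∈ Set.range φ)
    (htrans : ∀ v, w + v ∈ M.E ↔ v ∈ M.E) : M.IsDoublingOf M₀ := by
  refine ⟨hdim, φ, hφ, w, fun h => hwφ ⟨0, by rw [map_zero, h]⟩, hwφ, hwE, ?_⟩
  rw [hE₀, Set.image_preimage_eq_inter_range]
  ext v
  constructor
  · intro hv
    rcases hcover v with h | h
    · exact Or.inl ⟨hv, h⟩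
    · exact Or.inr ⟨w + v, ⟨(htrans v).2 hv, h⟩, ZModModule.add_add_cancel_left w v⟩
  · rintro (h | ⟨u, hu, rfl⟩)
    exacts [h.1, (htrans u).2 hu.1]

lemma exists_isDoublingOf_agUnionCosetMatroid {m : ℕ}
    {H W : Submodule (ZMod 2) (Fin (m + 1) → ZMod 2)} {x₀ : Fin (m + 1) → ZMod 2}
    (hH : finrank (ZMod 2) H = m) (hWH : W ≤ H) (hx₀H : x₀ ∈ H) (hx₀W : x₀ ∉ W) (hW : W ≠ ⊥) :
    ∃ (H' W' : Submodule (ZMod 2) (Fin m → ZMod 2)) (x₀' : Fin m → ZMod 2),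
      finrank (ZMod 2) H' + 1 = m ∧ W' ≤ H' ∧ x₀' ∈ H' ∧ x₀' ∉ W' ∧
      (agUnionCosetMatroid H W x₀).IsDoublingOf (agUnionCosetMatroid H' W' x₀') := by
  obtain ⟨w, hwW, hw0⟩ := exists_mem_ne_zero_of_ne_bot hW
  have hw : w ∉ span (ZMod 2) {x₀} := by
    rw [mem_span_singleton]
    rintro ⟨a, rfl⟩
    rcases ZModModule.smul_eq_zero_or_self a x₀ with h | h <;> rw [h] at hwW hw0
    exacts [hw0 rfl, hx₀W hwW]
  obtain ⟨f, hfw, hx₀f⟩ := exists_le_ker_of_notMem hw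
  have hfw1 : f w = 1 := (ZMod.eq_zero_or_eq_one _).resolve_left hfw
  obtain ⟨φ, hφ, hrange⟩ :=
    LinearMap.exists_injective_range_eq_ker (f := f) fun h => hfw (by simp [h])
  have hmem : ∀ v, v ∈ Set.range φ ↔ f v = 0 := fun v => by
    rw [← LinearMap.coe_range, SetLike.mem_coe, hrange, LinearMap.mem_ker]
  obtain ⟨x₀', rfl⟩ := (hmem x₀).mpr (hx₀f (mem_span_singleton_self x₀))
  refine ⟨H.comap φ, W.comap φ, x₀', ?_, comap_mono hWH, hx₀H, hx₀W,
    isDoublingOf_of_preimage (w := w) rfl hφ (preimage_agUnionCoset hφ x₀').symm ?_ ?_ ?_ ?_⟩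
  · rw [finrank_comap_of_injective hφ, hrange]
    have := finrank_inf_ker_add_one (hWH hwW) hfw
    omega
  · exact (hmem w).not.mpr hfw
  · change w ∉ agUnionCoset H W (φ x₀')
    rw [mem_agUnionCoset_iff hx₀W, W.add_mem_iff_left hwW]
    simp [hWH hwW, hx₀W]
  · intro (v : Fin (m + 1) → ZMod 2)
    rcases ZMod.eq_zero_or_eq_one (f v) with h | h
    exacts [Or.inl ((hmem v).mpr h), Or.inr ((hmem (w + v)).mpr (by rw [map_add, hfw1, h]; rfl))]
  · exact fun v => add_mem_agUnionCoset_iff hx₀W (hWH hwW) hwW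

theorem exists_isAGo_reflTransGen_isDoublingOf {n : ℕ}
    {H W : Submodule (ZMod 2) (Fin n → ZMod 2)} {x₀ : Fin n → ZMod 2}
    (hH : finrank (ZMod 2) H + 1 = n) (hWH : W ≤ H) (hx₀H : x₀ ∈ H) (hx₀W : x₀ ∉ W) :
    ∃ M₀ : BinMatroid, 2 ≤ M₀.dim ∧ M₀.IsAGo ∧
      Relation.ReflTransGen (fun A B => B.IsDoublingOf A) M₀ (agUnionCosetMatroid H W x₀) := by
  induction n with
  | zero => exact absurd (Subsingleton.elim x₀ 0 ▸ W.zero_mem) hx₀W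
  | succ m ih =>
    have hx₀ : x₀ ≠ 0 := fun h => hx₀W (h ▸ W.zero_mem)
    by_cases hW : W = ⊥
    · subst hW
      have : 1 ≤ finrank (ZMod 2) H :=
        one_le_finrank_iff.mpr ((Submodule.ne_bot_iff H).mpr ⟨x₀, hx₀H, hx₀⟩)
      exact ⟨_, by change 2 ≤ m + 1; omega, ⟨H, hH, x₀, ⟨hx₀H, hx₀⟩, agUnionCoset_bot hx₀⟩, .refl⟩
    · obtain ⟨H', W', x₀', hH', hW'H', hx₀'H', hx₀'W', hdouble⟩ :=
        exists_isDoublingOf_agUnionCosetMatroid (by omega) hWH hx₀H hx₀W hW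
      obtain ⟨M₀, h2, hAGo, hchain⟩ := ih hH' hW'H' hx₀'H' hx₀'W'
      exact ⟨M₀, h2, hAGo, hchain.tail hdouble⟩

end BinMatroid

/-- Let `M = (E, G)` be an `n`-dimensional matroid with an
`AG(n−1, 2)`-restriction, i.e. `G − H ⊆ E` for some hyperplane `H` of `G`. If `M`
contains neither `F₇` nor `I₃` as an induced restriction, then either `M ≅ AG(n−1, 2)`,
or there is `s ≥ 2` such that `M` arises from `AG°(s−1, 2)` by a sequence of
doublings. -/
theorem stmt17 (M : BinMatroid)
    (H : Submodule (ZMod 2) (Fin M.dim → ZMod 2))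
    (hH : Module.finrank (ZMod 2) H + 1 = M.dim)
    (hAG : {v : Fin M.dim → ZMod 2 | v ≠ 0} \ (H : Set (Fin M.dim → ZMod 2)) ⊆ M.E)
    (hF7 : ¬ M.HasIR F7) (hI3 : ¬ M.HasIR I3) :
    (∃ H' : Submodule (ZMod 2) (Fin M.dim → ZMod 2),
        Module.finrank (ZMod 2) H' + 1 = M.dim ∧
        M.E = {v | v ≠ 0} \ (H' : Set (Fin M.dim → ZMod 2))) ∨
      ∃ s : ℕ, 2 ≤ s ∧ ∃ M₀ : BinMatroid, M₀.dim = s ∧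
        M₀.IsAGo ∧ M.ArisesByDoublings M₀ := by
  have hHtop : H ≠ ⊤ := fun h => by
    rw [h, finrank_top, finrank_fin_fun] at hH
    omega
  by_cases hEH : ∃ x₀ ∈ M.E, x₀ ∈ H
  · obtain ⟨x₀, hx₀, hx₀H⟩ := hEH
    obtain ⟨W, hWH, hx₀W, hE⟩ := BinMatroid.exists_eq_agUnionCoset hHtop hAG hF7 hI3 hx₀ hx₀H
    obtain ⟨M₀, h2, hAGo, hchain⟩ :=
      BinMatroid.exists_isAGo_reflTransGen_isDoublingOf hH hWH hx₀H hx₀W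
    exact Or.inr ⟨M₀.dim, h2, M₀, rfl, hAGo, _, hchain, BinMatroid.iso_agUnionCosetMatroid hE⟩
  · exact Or.inl ⟨H, hH, Set.Subset.antisymm
      (fun v hv => ⟨ne_of_mem_of_not_mem hv M.zero_not_mem, fun hvH => hEH ⟨v, hv, hvH⟩⟩) hAG⟩
end

section
/- If M ∈ ℰ₃ and χ(M) ≥ 3, then M contains K₅ as an induced restriction. -/
namespace Stmt19Aux

lemma z2 (a : ZMod 2) : a = 0 ∨ a = 1 := by revert a; decide

lemma z2ne (a : ZMod 2) (h : a ≠ 0) : a = 1 := by revert a; decide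

lemma z2add (a : ZMod 2) : a + a = 0 := by revert a; decide

variable {n : ℕ}

lemma vadd_self (x : Fin n → ZMod 2) : x + x = 0 := by
  funext i; exact z2add (x i)

lemma vcancel {x y : Fin n → ZMod 2} (h : x + y = 0) : x = y := by
  have : x + (x + y) = x + 0 := by rw [h]
  rwa [← add_assoc, vadd_self, zero_add, add_zero, eq_comm] at this

section QF

variable (f : (Fin n → ZMod 2) → ZMod 2)

/-- The polar form. -/
def Bf (x y : Fin n → ZMod 2) : ZMod 2 := f (x + y) + f x + f y

variable {f}
variable (hf0 : f 0 = 0)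
variable (h7 : ∀ x y z, f (x + y + z) = f (x+y) + f (x+z) + f (y+z) + f x + f y + f z)

include hf0 in
lemma Bf_self (x : Fin n → ZMod 2) : Bf f x x = 0 := by
  unfold Bf
  rw [vadd_self, hf0, zero_add]
  exact z2add _

include hf0 in
lemma Bf_zero (x : Fin n → ZMod 2) : Bf f x 0 = 0 := by
  simp [Bf, hf0, z2add]

lemma Bf_comm (x y : Fin n → ZMod 2) : Bf f x y = Bf f y x := by
  simp [Bf, add_comm]; ring

include h7 in
lemma Bf_add (x y z : Fin n → ZMod 2) : Bf f x (y + z) = Bf f x y + Bf f x z := by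
  have h := h7 x y z
  unfold Bf
  rw [← add_assoc, h]
  generalize f (x+y) = A; generalize f (x+z) = B; generalize f (y+z) = C
  generalize f x = D; generalize f y = E; generalize f z = F
  revert A B C D E F; decide

include h7 hf0 in
lemma Bf_add' (x y z : Fin n → ZMod 2) : Bf f (x + y) z = Bf f x z + Bf f y z := by
  rw [Bf_comm, Bf_add h7, Bf_comm (f:=f) z x, Bf_comm (f:=f) z y]

include h7 hf0 in
lemma Bf_smul (x : Fin n → ZMod 2) (c : ZMod 2) (y : Fin n → ZMod 2) :
    Bf f x (c • y) = c * Bf f x y := by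
  rcases z2 c with h | h <;> subst h <;> simp [Bf_zero hf0]

variable (f) in
include hf0 h7 in
/-- B as a linear map in the second argument. -/
def BL (x : Fin n → ZMod 2) : (Fin n → ZMod 2) →ₗ[ZMod 2] ZMod 2 where
  toFun := Bf f x
  map_add' := Bf_add h7 x
  map_smul' := by intro c y; simpa using Bf_smul hf0 h7 x c y

@[simp] lemma BL_apply (x y : Fin n → ZMod 2) : BL f hf0 h7 x y = Bf f x y := rfl

lemma f_add (x y : Fin n → ZMod 2) : f (x + y) = f x + f y + Bf f x y := by
  unfold Bf; generalize f (x+y) = A; generalize f x = B; generalize f y = C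
  revert A B C; decide

include hf0 h7 in
lemma f_add3 (x y z : Fin n → ZMod 2) :
    f (x + y + z) = f x + f y + f z + Bf f x y + Bf f x z + Bf f y z := by
  rw [f_add (f:=f) (x+y) z, f_add (f:=f) x y, Bf_add' hf0 h7]
  ring

end QF

end Stmt19Aux

namespace Stmt19Aux2
open Stmt19Aux Module Submodule

variable {n : ℕ}

lemma z2eq {a b : ZMod 2} (h : a + b = 0) : a = b := by revert h; revert a b; decide

lemma shp1 (x y : Fin n → ZMod 2) : x + (x + y) = y := by
  funext i; simp only [Pi.add_apply]
  generalize x i = a; generalize y i = b; revert a b; decide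

lemma shp3 (x y : Fin n → ZMod 2) : (x + y) + y = x := by
  funext i; simp only [Pi.add_apply]
  generalize x i = a; generalize y i = b; revert a b; decide

lemma shpA (x v u : Fin n → ZMod 2) : (x + v + u) + (v + u) = x := by
  funext i; simp only [Pi.add_apply]
  generalize x i = a; generalize v i = b; generalize u i = c; revert a b c; decide

lemma shpB (x v u : Fin n → ZMod 2) : (x + u) + (x + v + u) = v := by
  funext i; simp only [Pi.add_apply]
  generalize x i = a; generalize v i = b; generalize u i = c; revert a b c; decide

lemma shpC (x v r : Fin n → ZMod 2) : ((x + v) + r) + (r + v) = x := by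
  funext i; simp only [Pi.add_apply]
  generalize x i = a; generalize v i = b; generalize r i = c; revert a b c; decide

lemma shpE (x y : Fin n → ZMod 2) : y + (x + y) = x := by
  funext i; simp only [Pi.add_apply]
  generalize x i = a; generalize y i = b; revert a b; decide

lemma shp4 (x y : Fin n → ZMod 2) : (x + y) + x = y := by
  funext i; simp only [Pi.add_apply]
  generalize x i = a; generalize y i = b; revert a b; decide

lemma frV : finrank (ZMod 2) (Fin n → ZMod 2) = n := by simp

lemma ker2_rank (L : (Fin n → ZMod 2) →ₗ[ZMod 2] ZMod 2 × ZMod 2) :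
    n ≤ finrank (ZMod 2) (LinearMap.ker L) + 2 := by
  have h := LinearMap.finrank_range_add_finrank_ker L
  have h2 : finrank (ZMod 2) (LinearMap.range L) ≤ 2 := by
    have := Submodule.finrank_le (LinearMap.range L); simpa using this
  rw [frV] at h; omega

lemma fr_span1 (x : Fin n → ZMod 2) :
    finrank (ZMod 2) (span (ZMod 2) ({x} : Set (Fin n → ZMod 2))) ≤ 1 := by
  rw [LinearMap.span_singleton_eq_range (ZMod 2) _ x]
  have := LinearMap.finrank_range_le (LinearMap.toSpanSingleton (ZMod 2) (Fin n → ZMod 2) x)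
  simpa using this

lemma fr_span2 (x y : Fin n → ZMod 2) :
    finrank (ZMod 2) (span (ZMod 2) ({x, y} : Set (Fin n → ZMod 2))) ≤ 2 := by
  have h : span (ZMod 2) ({x, y} : Set (Fin n → ZMod 2)) =
      span (ZMod 2) {x} ⊔ span (ZMod 2) {y} := by
    rw [← Submodule.span_insert]
  rw [h]
  have h1 := fr_span1 (n := n) x
  have h2 := fr_span1 (n := n) y
  have h3 := Submodule.finrank_sup_add_finrank_inf_eq (span (ZMod 2) ({x} : Set (Fin n → ZMod 2))) (span (ZMod 2) ({y} : Set (Fin n → ZMod 2)))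
  omega

lemma fr_sup_le (P Q : Submodule (ZMod 2) (Fin n → ZMod 2)) :
    finrank (ZMod 2) ↥(P ⊔ Q) ≤ finrank (ZMod 2) P + finrank (ZMod 2) Q := by
  have := Submodule.finrank_sup_add_finrank_inf_eq P Q; omega

section Main

variable {f : (Fin n → ZMod 2) → ZMod 2}
variable (hf0 : f 0 = 0)
variable (h7 : ∀ x y z, f (x + y + z) = f (x+y) + f (x+z) + f (y+z) + f x + f y + f z)

variable (f) in
include hf0 h7 in
/-- the submodule `R₀` of radical vectors with `f = 0`. -/
def Rz : Submodule (ZMod 2) (Fin n → ZMod 2) where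
  carrier := {x | f x = 0 ∧ ∀ u, Bf f x u = 0}
  zero_mem' := by
    refine ⟨hf0, fun u => ?_⟩
    unfold Bf; rw [zero_add, hf0]
    generalize f u = A; revert A; decide
  add_mem' := by
    rintro x y ⟨hx, hxR⟩ ⟨hy, hyR⟩
    refine ⟨?_, fun u => ?_⟩
    · rw [f_add (f := f) x y, hx, hy, hxR y]; decide
    · rw [Bf_add' hf0 h7, hxR u, hyR u, add_zero]
  smul_mem' := by
    intro c x hx
    rcases z2 c with h | h <;> subst h
    · rw [zero_smul]
      refine ⟨hf0, fun u => ?_⟩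
      unfold Bf; rw [zero_add, hf0]
      generalize f u = A; revert A; decide
    · rw [one_smul]; exact hx

lemma mem_Rz {x : Fin n → ZMod 2} :
    x ∈ Rz f hf0 h7 ↔ f x = 0 ∧ ∀ u, Bf f x u = 0 := Iff.rfl

variable (hNZ : ∀ W : Submodule (ZMod 2) (Fin n → ZMod 2),
    (∀ x ∈ W, f x = 0) → Module.finrank (ZMod 2) W + 3 ≤ n)

include hf0 h7 hNZ in
lemma edge_exists : ∃ a b, f a = 1 ∧ f b = 1 ∧ Bf f a b = 1 := by
  classical
  by_contra hno
  push_neg at hno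
  have hno' : ∀ x y, f x = 1 → f y = 1 → Bf f x y = 0 := fun x y hx hy => by
    rcases z2 (Bf f x y) with h | h
    · exact h
    · exact absurd h (hno x y hx hy)
  by_cases hO : ∃ r, f r = 1
  · obtain ⟨r1, hr1⟩ := hO
    by_cases hOR : ∃ p t, f p = 1 ∧ Bf f p t = 1
    · obtain ⟨p, t, hp, hpt⟩ := hOR
      have hft : f t = 0 := by
        rcases z2 (f t) with h | h
        · exact h
        · exact absurd hpt (hno p t hp h)
      have key : ∀ x, Bf f p x = 0 → f x = Bf f t x := by
        intro x hx
        have h1 : Bf f p (x + t) = 1 := by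
          rw [Bf_add h7, hx, zero_add, hpt]
        have h2 : f (x + t) = 0 := by
          rcases z2 (f (x + t)) with h | h
          · exact h
          · exact absurd h1 (hno p (x + t) hp h)
        have h3 := f_add (f := f) x t
        rw [h2, hft, add_zero] at h3
        have h4 := z2eq h3.symm
        rw [h4, Bf_comm]
      set L := (BL f hf0 h7 p).prod (BL f hf0 h7 t) with hL
      have hW0 : ∀ x ∈ LinearMap.ker L, f x = 0 := by
        intro x hx
        rw [LinearMap.mem_ker] at hx
        have h1 : Bf f p x = 0 := congrArg Prod.fst hx
        have h2 : Bf f t x = 0 := congrArg Prod.snd hx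
        rw [key x h1]; exact h2
      have hA := hNZ _ hW0
      have hB := ker2_rank L
      omega
    · push_neg at hOR
      have hR : ∀ x, f x = 1 → ∀ u, Bf f x u = 0 := fun x hx u => by
        rcases z2 (Bf f x u) with h | h
        · exact h
        · exact absurd h (hOR x u hx)
      set K := Rz f hf0 h7 with hK
      by_cases hv : ∃ v y, Bf f v y = 1
      · obtain ⟨v, y0, hv1⟩ := hv
        have hfv : f v = 0 := by
          rcases z2 (f v) with h | h
          · exact h
          · exact absurd hv1 (by rw [hR v h y0]; decide)
        have hα : ∀ x y, Bf f x y = 1 → (∀ u, Bf f (x + y) u = 0) := by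
          intro x y hxy
          have hfx : f x = 0 := by
            rcases z2 (f x) with h | h
            · exact h
            · exact absurd hxy (by rw [hR x h y]; decide)
          have hfy : f y = 0 := by
            rcases z2 (f y) with h | h
            · exact h
            · have h5 := hR y h x
              rw [Bf_comm] at h5
              exact absurd hxy (by rw [h5]; decide)
          have hfxy : f (x + y) = 1 := by
            rw [f_add (f := f) x y, hfx, hfy, hxy]; decide
          exact hR _ hfxy
        have dich : ∀ x, (∀ u, Bf f x u = 0) ∨ (∀ u, Bf f (x + v) u = 0) := by
          intro x
          by_contra hcon
          push_neg at hcon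
          obtain ⟨⟨u1, hu1⟩, u2, hu2⟩ := hcon
          have hxu1 : Bf f x u1 = 1 := z2ne _ hu1
          have hxvu2 : Bf f (x + v) u2 = 1 := z2ne _ hu2
          have hsum : Bf f x u2 + Bf f v u2 = 1 := by
            rw [← Bf_add' hf0 h7]; exact hxvu2
          have hRxvu2 := hα _ _ hxvu2
          rcases z2 (Bf f x u2) with h | h
          · have hvu2 : Bf f v u2 = 1 := by
              rw [h, zero_add] at hsum; exact hsum
            have hRvu2 := hα _ _ hvu2
            have hx0 : Bf f x u1 = 0 := by
              rw [← shpA x v u2, Bf_add' hf0 h7, hRxvu2 u1, hRvu2 u1, add_zero]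
            exact absurd hxu1 (by rw [hx0]; decide)
          · have hRxu2 := hα _ _ h
            have hv0 : Bf f v y0 = 0 := by
              rw [← shpB x v u2, Bf_add' hf0 h7, hRxu2 y0, hRxvu2 y0, add_zero]
            exact absurd hv1 (by rw [hv0]; decide)
        have hcov : (⊤ : Submodule (ZMod 2) (Fin n → ZMod 2)) ≤
            K ⊔ span (ZMod 2) {r1, v} := by
          intro x _
          have hvmem : v ∈ span (ZMod 2) ({r1, v} : Set (Fin n → ZMod 2)) :=
            Submodule.subset_span (by simp)
          have hrmem : r1 ∈ span (ZMod 2) ({r1, v} : Set (Fin n → ZMod 2)) :=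
            Submodule.subset_span (by simp)
          rcases z2 (f x) with hfx | hfx
          · rcases dich x with hPx | hPxv
            · exact Submodule.mem_sup_left ((mem_Rz hf0 h7).mpr ⟨hfx, hPx⟩)
            · rcases z2 (f (x + v)) with hfxv | hfxv
              · have hm := Submodule.add_mem_sup
                  ((mem_Rz hf0 h7).mpr ⟨hfxv, hPxv⟩ : x + v ∈ K) hvmem
                rwa [shp3] at hm
              · have hk : (x + v) + r1 ∈ K := (mem_Rz hf0 h7).mpr
                  ⟨by rw [f_add (f := f) (x + v) r1, hfxv, hr1, hPxv r1]; decide,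
                   fun u => by rw [Bf_add' hf0 h7, hPxv u, hR r1 hr1 u, add_zero]⟩
                have hm := Submodule.add_mem_sup hk (add_mem hrmem hvmem)
                rwa [shpC] at hm
          · have hPx := hR x hfx
            have hk : x + r1 ∈ K := (mem_Rz hf0 h7).mpr
              ⟨by rw [f_add (f := f) x r1, hfx, hr1, hPx r1]; decide,
               fun u => by rw [Bf_add' hf0 h7, hPx u, hR r1 hr1 u, add_zero]⟩
            have hm := Submodule.add_mem_sup hk hrmem
            rwa [shp3] at hm
        have h1 : n ≤ finrank (ZMod 2) K + 2 := by
          have e1 : finrank (ZMod 2) (⊤ : Submodule (ZMod 2) (Fin n → ZMod 2)) ≤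
              finrank (ZMod 2) ↥(K ⊔ span (ZMod 2) {r1, v}) :=
            Submodule.finrank_mono hcov
          have e2 := fr_sup_le K (span (ZMod 2) ({r1, v} : Set (Fin n → ZMod 2)))
          have e3 := fr_span2 (n := n) r1 v
          have e4 : finrank (ZMod 2) (⊤ : Submodule (ZMod 2) (Fin n → ZMod 2)) = n := by
            rw [finrank_top, frV]
          omega
        have hWz : ∀ x ∈ K ⊔ span (ZMod 2) ({v} : Set (Fin n → ZMod 2)), f x = 0 := by
          intro x hx
          obtain ⟨z, hz, y, hy, rfl⟩ := Submodule.mem_sup.mp hx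
          obtain ⟨α, rfl⟩ := Submodule.mem_span_singleton.mp hy
          obtain ⟨hz1, hz2⟩ := (mem_Rz hf0 h7).mp hz
          rw [f_add (f := f) z (α • v), hz1, hz2 (α • v), add_zero, zero_add]
          rcases z2 α with h | h <;> subst h
          · rw [zero_smul]; exact hf0
          · rw [one_smul]; exact hfv
        have hvK : v ∉ K := fun hvk =>
          absurd hv1 (by rw [((mem_Rz hf0 h7).mp hvk).2 y0]; decide)
        have hlt : K < K ⊔ span (ZMod 2) ({v} : Set (Fin n → ZMod 2)) := by
          rw [SetLike.lt_iff_le_and_exists]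
          exact ⟨le_sup_left, v,
            Submodule.mem_sup_right (Submodule.mem_span_singleton_self v), hvK⟩
        have h2 := Submodule.finrank_lt_finrank_of_lt hlt
        have h3 := hNZ _ hWz
        omega
      · push_neg at hv
        have hB0 : ∀ x u, Bf f x u = 0 := fun x u => by
          rcases z2 (Bf f x u) with h | h
          · exact h
          · exact absurd h (hv x u)
        have hcov : (⊤ : Submodule (ZMod 2) (Fin n → ZMod 2)) ≤
            K ⊔ span (ZMod 2) {r1} := by
          intro x _
          rcases z2 (f x) with hfx | hfx
          · exact Submodule.mem_sup_left ((mem_Rz hf0 h7).mpr ⟨hfx, hB0 x⟩)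
          · have hk : x + r1 ∈ K := (mem_Rz hf0 h7).mpr
              ⟨by rw [f_add (f := f) x r1, hfx, hr1, hB0 x r1]; decide, hB0 _⟩
            have hm := Submodule.add_mem_sup hk (Submodule.mem_span_singleton_self r1)
            rwa [shp3] at hm
        have h1 : n ≤ finrank (ZMod 2) K + 1 := by
          have e1 : finrank (ZMod 2) (⊤ : Submodule (ZMod 2) (Fin n → ZMod 2)) ≤
              finrank (ZMod 2) ↥(K ⊔ span (ZMod 2) {r1}) :=
            Submodule.finrank_mono hcov
          have e2 := fr_sup_le K (span (ZMod 2) ({r1} : Set (Fin n → ZMod 2)))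
          have e3 := fr_span1 (n := n) r1
          have e4 : finrank (ZMod 2) (⊤ : Submodule (ZMod 2) (Fin n → ZMod 2)) = n := by
            rw [finrank_top, frV]
          omega
        have h3 := hNZ K (fun x hx => ((mem_Rz hf0 h7).mp hx).1)
        omega
  · have hz : ∀ x, f x = 0 := fun x => by
      rcases z2 (f x) with h | h
      · exact h
      · exact absurd ⟨x, h⟩ hO
    have hA := hNZ ⊤ (fun x _ => hz x)
    have hB : finrank (ZMod 2) (⊤ : Submodule (ZMod 2) (Fin n → ZMod 2)) = n := by
      rw [finrank_top, frV]
    omega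


include hf0 h7 hNZ in
lemma clique_exists : ∃ a b c d, f a = 1 ∧ f b = 1 ∧ f c = 1 ∧ f d = 1 ∧
    Bf f a b = 1 ∧ Bf f a c = 1 ∧ Bf f a d = 1 ∧ Bf f b c = 1 ∧ Bf f b d = 1 ∧
    Bf f c d = 1 := by
  classical
  obtain ⟨a, b, hfa, hfb, hab⟩ := edge_exists hf0 h7 hNZ
  by_cases hgood : ∃ c, f c = 1 ∧ Bf f a c = 1 ∧ Bf f b c = 1 ∧ ∃ t, Bf f (a+b+c) t = 1
  · obtain ⟨c, hfc, hac, hbc, t, ht⟩ := hgood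
    rw [Bf_add' hf0 h7, Bf_add' hf0 h7] at ht
    have fin : ∀ s, Bf f a s = 1 → Bf f b s = 1 → Bf f c s = 1 →
        ∃ a b c d, f a = 1 ∧ f b = 1 ∧ f c = 1 ∧ f d = 1 ∧
        Bf f a b = 1 ∧ Bf f a c = 1 ∧ Bf f a d = 1 ∧ Bf f b c = 1 ∧ Bf f b d = 1 ∧
        Bf f c d = 1 := by
      intro s hsa hsb hsc
      rw [Bf_comm (f := f) a s] at hsa
      rw [Bf_comm (f := f) b s] at hsb
      rw [Bf_comm (f := f) c s] at hsc
      rcases z2 (f s) with hfs | hfs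
      · have fabc : f (a+b+c) = 0 := by
          rw [f_add3 hf0 h7, hfa, hfb, hfc, hab, hac, hbc]; decide
        have hBabcs : Bf f (a+b+c) s = 1 := by
          rw [Bf_add' hf0 h7, Bf_add' hf0 h7, Bf_comm (f := f) a s,
            Bf_comm (f := f) b s, Bf_comm (f := f) c s, hsa, hsb, hsc]; decide
        have hfd : f (a+b+c+s) = 1 := by
          rw [f_add (f := f) (a+b+c) s, fabc, hfs, hBabcs]; decide
        have hB4 : ∀ x, Bf f x (a+b+c+s) = Bf f x a + Bf f x b + Bf f x c + Bf f x s := by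
          intro x; rw [Bf_add h7, Bf_add h7, Bf_add h7]
        have hda : Bf f a (a+b+c+s) = 1 := by
          rw [hB4, Bf_self hf0, hab, hac, Bf_comm (f := f) a s, hsa]; decide
        have hdb : Bf f b (a+b+c+s) = 1 := by
          rw [hB4, Bf_comm (f := f) b a, hab, Bf_self hf0, hbc,
            Bf_comm (f := f) b s, hsb]; decide
        have hdc : Bf f c (a+b+c+s) = 1 := by
          rw [hB4, Bf_comm (f := f) c a, hac, Bf_comm (f := f) c b, hbc,
            Bf_self hf0, Bf_comm (f := f) c s, hsc]; decide
        exact ⟨a, b, c, a+b+c+s, hfa, hfb, hfc, hfd, hab, hac, hda, hbc, hdb, hdc⟩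
      · exact ⟨a, b, c, s, hfa, hfb, hfc, hfs, hab, hac,
          by rw [Bf_comm (f := f) a s]; exact hsa, hbc,
          by rw [Bf_comm (f := f) b s]; exact hsb,
          by rw [Bf_comm (f := f) c s]; exact hsc⟩
    rcases z2 (Bf f a t) with h1 | h1 <;> rcases z2 (Bf f b t) with h2 | h2 <;>
      rcases z2 (Bf f c t) with h3 | h3 <;> rw [h1, h2, h3] at ht
    · exact absurd ht (by decide)
    · refine fin (t + (a + b)) ?_ ?_ ?_
      · rw [Bf_add h7, Bf_add h7, h1, Bf_self hf0, hab]; decide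
      · rw [Bf_add h7, Bf_add h7, h2, Bf_comm (f := f) b a, hab, Bf_self hf0]; decide
      · rw [Bf_add h7, Bf_add h7, h3, Bf_comm (f := f) c a, hac,
          Bf_comm (f := f) c b, hbc]; decide
    · refine fin (t + (a + c)) ?_ ?_ ?_
      · rw [Bf_add h7, Bf_add h7, h1, Bf_self hf0, hac]; decide
      · rw [Bf_add h7, Bf_add h7, h2, Bf_comm (f := f) b a, hab, hbc]; decide
      · rw [Bf_add h7, Bf_add h7, h3, Bf_comm (f := f) c a, hac, Bf_self hf0]; decide
    · exact absurd ht (by decide)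
    · refine fin (t + (b + c)) ?_ ?_ ?_
      · rw [Bf_add h7, Bf_add h7, h1, hab, hac]; decide
      · rw [Bf_add h7, Bf_add h7, h2, Bf_self hf0, hbc]; decide
      · rw [Bf_add h7, Bf_add h7, h3, Bf_comm (f := f) c b, hbc, Bf_self hf0]; decide
    · exact absurd ht (by decide)
    · exact absurd ht (by decide)
    · exact fin t h1 h2 h3
  · exfalso
    push_neg at hgood
    have hbad : ∀ x, f x = 1 → Bf f a x = 1 → Bf f b x = 1 →
        ∀ t, Bf f (a+b+x) t = 0 := by
      intro x h1 h2 h3 t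
      rcases z2 (Bf f (a+b+x) t) with h | h
      · exact h
      · exact absurd h (hgood x h1 h2 h3 t)
    set K := Rz f hf0 h7 with hKdef
    have hsp : ∀ y, Bf f a y = 0 → Bf f b y = 0 → f y = 0 → y ∈ K := by
      intro y h1 h2 h3
      have hx1 : f (a+b+y) = 1 := by
        rw [f_add3 hf0 h7, hfa, hfb, h3, hab, h1, h2]; decide
      have hxa : Bf f a (a+b+y) = 1 := by
        rw [Bf_add h7, Bf_add h7, Bf_self hf0, hab, h1]; decide
      have hxb : Bf f b (a+b+y) = 1 := by
        rw [Bf_add h7, Bf_add h7, Bf_comm (f := f) b a, hab, Bf_self hf0, h2]; decide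
      have hall := hbad (a+b+y) hx1 hxa hxb
      refine (mem_Rz hf0 h7).mpr ⟨h3, fun u => ?_⟩
      have h5 := hall u
      rwa [shp1 (a+b) y] at h5
    have hT : ∀ y, Bf f a y = 0 → Bf f b y = 0 → y ∉ K → f y = 1 := by
      intro y h1 h2 hy
      rcases z2 (f y) with h | h
      · exact absurd (hsp y h1 h2 h) hy
      · exact h
    have hPair : ∀ y y', Bf f a y = 0 → Bf f b y = 0 → Bf f a y' = 0 → Bf f b y' = 0 →
        y ∉ K → y' ∉ K → (y + y') ∉ K → Bf f y y' = 1 := by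
      intro y y' h1 h2 h3 h4 hy hy' hyy
      have hfy := hT y h1 h2 hy
      have hfy' := hT y' h3 h4 hy'
      have hfyy : f (y + y') = 1 := by
        refine hT _ ?_ ?_ hyy
        · rw [Bf_add h7, h1, h3, add_zero]
        · rw [Bf_add h7, h2, h4, add_zero]
      show f (y + y') + f y + f y' = 1
      rw [hfyy, hfy, hfy']; decide
    set L2 := (BL f hf0 h7 a).prod (BL f hf0 h7 b) with hL2
    have hkerT : ∀ x ∈ LinearMap.ker L2, Bf f a x = 0 ∧ Bf f b x = 0 := by
      intro x hx
      rw [LinearMap.mem_ker] at hx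
      exact ⟨congrArg Prod.fst hx, congrArg Prod.snd hx⟩
    have hTker : ∀ x, Bf f a x = 0 → Bf f b x = 0 → x ∈ LinearMap.ker L2 := by
      intro x h1 h2
      rw [LinearMap.mem_ker]
      exact Prod.ext h1 h2
    by_cases hu1 : ∃ u, Bf f a u = 0 ∧ Bf f b u = 0 ∧ u ∉ K
    · obtain ⟨u1, ha1, hb1, hk1⟩ := hu1
      have hfu1 := hT u1 ha1 hb1 hk1
      have w1K : a + u1 ∉ K := by
        intro h
        have hz := ((mem_Rz hf0 h7).mp h).2 b
        rw [Bf_add' hf0 h7, hab, Bf_comm (f := f) u1 b, hb1, add_zero] at hz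
        exact absurd hz (by decide)
      have fw1 : f (a + u1) = 0 := by
        rw [f_add (f := f) a u1, hfa, hfu1, ha1]; decide
      by_cases hu2 : ∃ u, Bf f a u = 0 ∧ Bf f b u = 0 ∧
          u ∉ K ⊔ span (ZMod 2) {u1}
      · obtain ⟨u2, ha2, hb2, hk2⟩ := hu2
        have hk2' : u2 ∉ K := fun h => hk2 (Submodule.mem_sup_left h)
        have hfu2 := hT u2 ha2 hb2 hk2'
        have n12 : u1 + u2 ∉ K := by
          intro h
          have hm := Submodule.add_mem_sup h (Submodule.mem_span_singleton_self u1)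
          rw [shp4] at hm
          exact hk2 hm
        have B12 := hPair u1 u2 ha1 hb1 ha2 hb2 hk1 hk2' n12
        by_cases hu3 : ∃ u, Bf f a u = 0 ∧ Bf f b u = 0 ∧
            u ∉ K ⊔ span (ZMod 2) {u1, u2}
        · -- case (iv) : direct contradiction
          obtain ⟨u3, ha3, hb3, hk3⟩ := hu3
          have hu1mem : u1 ∈ span (ZMod 2) ({u1, u2} : Set (Fin n → ZMod 2)) :=
            Submodule.subset_span (by simp)
          have hu2mem : u2 ∈ span (ZMod 2) ({u1, u2} : Set (Fin n → ZMod 2)) :=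
            Submodule.subset_span (by simp)
          have hk3' : u3 ∉ K := fun h => hk3 (Submodule.mem_sup_left h)
          have hfu3 := hT u3 ha3 hb3 hk3'
          have n13 : u1 + u3 ∉ K := by
            intro h
            have hm := Submodule.add_mem_sup h hu1mem
            rw [shp4] at hm
            exact hk3 hm
          have n23 : u2 + u3 ∉ K := by
            intro h
            have hm := Submodule.add_mem_sup h hu2mem
            rw [shp4] at hm
            exact hk3 hm
          have n4 : u1 + u2 + u3 ∉ K := by
            intro h
            have hm := Submodule.add_mem_sup h (add_mem hu1mem hu2mem)
            rw [shp4] at hm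
            exact hk3 hm
          have B13 := hPair u1 u3 ha1 hb1 ha3 hb3 hk1 hk3' n13
          have B23 := hPair u2 u3 ha2 hb2 ha3 hb3 hk2' hk3' n23
          have fu4a : Bf f a (u1+u2+u3) = 0 := by
            rw [Bf_add h7, Bf_add h7, ha1, ha2, ha3]; decide
          have fu4b : Bf f b (u1+u2+u3) = 0 := by
            rw [Bf_add h7, Bf_add h7, hb1, hb2, hb3]; decide
          have fu4 := hT _ fu4a fu4b n4
          have fu40 : f (u1+u2+u3) = 0 := by
            rw [f_add3 hf0 h7, hfu1, hfu2, hfu3, B12, B13, B23]; decide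
          rw [fu40] at fu4
          exact absurd fu4 (by decide)
        · -- case (iii)
          push_neg at hu3
          have fw2 : f (b + u2) = 0 := by
            rw [f_add (f := f) b u2, hfb, hfu2, hb2]; decide
          have Bw0 : Bf f (a + u1) (b + u2) = 0 := by
            rw [Bf_add' hf0 h7, Bf_add h7, Bf_add h7, hab, ha2,
              Bf_comm (f := f) u1 b, hb1, B12]; decide
          have fw12 : f ((a + u1) + (b + u2)) = 0 := by
            rw [f_add (f := f) (a+u1) (b+u2), fw1, fw2, Bw0]; decide
          have hWz : ∀ x ∈ K ⊔ span (ZMod 2) ({a + u1, b + u2} :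
              Set (Fin n → ZMod 2)), f x = 0 := by
            intro x hx
            obtain ⟨z, hz, y, hy, rfl⟩ := Submodule.mem_sup.mp hx
            obtain ⟨α, β, rfl⟩ := Submodule.mem_span_pair.mp hy
            obtain ⟨hz1, hz2⟩ := (mem_Rz hf0 h7).mp hz
            rw [f_add (f := f) z _, hz1, hz2 _, add_zero, zero_add]
            rcases z2 α with h | h <;> rcases z2 β with h' | h' <;> subst h <;> subst h'
            · rw [zero_smul, zero_smul, add_zero]; exact hf0
            · rw [zero_smul, one_smul, zero_add]; exact fw2
            · rw [one_smul, zero_smul, add_zero]; exact fw1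
            · rw [one_smul, one_smul]; exact fw12
          have hker_le : LinearMap.ker L2 ≤ K ⊔ span (ZMod 2) {u1, u2} := by
            intro x hx
            obtain ⟨h1, h2⟩ := hkerT x hx
            exact hu3 x h1 h2
          have e0 := ker2_rank L2
          have e1 := Submodule.finrank_mono hker_le
          have e2 := fr_sup_le K (span (ZMod 2) ({u1, u2} : Set (Fin n → ZMod 2)))
          have e3 := fr_span2 (n := n) u1 u2
          have lt1 : K < K ⊔ span (ZMod 2) ({a + u1} : Set (Fin n → ZMod 2)) := by
            rw [SetLike.lt_iff_le_and_exists]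
            exact ⟨le_sup_left, a + u1,
              Submodule.mem_sup_right (Submodule.mem_span_singleton_self _), w1K⟩
          have w2sup : b + u2 ∉ K ⊔ span (ZMod 2) ({a + u1} :
              Set (Fin n → ZMod 2)) := by
            intro hmem
            obtain ⟨z, hz, y, hy, heq⟩ := Submodule.mem_sup.mp hmem
            obtain ⟨α, rfl⟩ := Submodule.mem_span_singleton.mp hy
            have hval1 : Bf f (b + u2) a = 1 := by
              rw [Bf_add' hf0 h7, Bf_comm (f := f) b a, hab,
                Bf_comm (f := f) u2 a, ha2]; decide
            have hBw1a : Bf f (a + u1) a = 0 := by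
              rw [Bf_add' hf0 h7, Bf_self hf0, Bf_comm (f := f) u1 a, ha1]; decide
            have hval0 : Bf f (z + α • (a + u1)) a = 0 := by
              rw [Bf_add' hf0 h7, ((mem_Rz hf0 h7).mp hz).2 a,
                Bf_comm (f := f) (α • (a + u1)) a, Bf_smul hf0 h7,
                Bf_comm (f := f) a (a + u1), hBw1a, mul_zero, add_zero]
            rw [heq] at hval0
            rw [hval0] at hval1
            exact absurd hval1 (by decide)
          have hWeq : K ⊔ span (ZMod 2) ({a + u1, b + u2} : Set (Fin n → ZMod 2)) =
              (K ⊔ span (ZMod 2) {a + u1}) ⊔ span (ZMod 2) {b + u2} := by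
            rw [Submodule.span_insert, sup_assoc]
          have lt2 : (K ⊔ span (ZMod 2) ({a + u1} : Set (Fin n → ZMod 2))) <
              K ⊔ span (ZMod 2) ({a + u1, b + u2} : Set (Fin n → ZMod 2)) := by
            rw [SetLike.lt_iff_le_and_exists, hWeq]
            exact ⟨le_sup_left, b + u2,
              Submodule.mem_sup_right (Submodule.mem_span_singleton_self _), w2sup⟩
          have d1 := Submodule.finrank_lt_finrank_of_lt lt1
          have d2 := Submodule.finrank_lt_finrank_of_lt lt2
          have h3 := hNZ _ hWz
          omega
      · -- case (ii)
        push_neg at hu2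
        have hWz : ∀ x ∈ K ⊔ span (ZMod 2) ({a + u1} :
            Set (Fin n → ZMod 2)), f x = 0 := by
          intro x hx
          obtain ⟨z, hz, y, hy, rfl⟩ := Submodule.mem_sup.mp hx
          obtain ⟨α, rfl⟩ := Submodule.mem_span_singleton.mp hy
          obtain ⟨hz1, hz2⟩ := (mem_Rz hf0 h7).mp hz
          rw [f_add (f := f) z _, hz1, hz2 _, add_zero, zero_add]
          rcases z2 α with h | h <;> subst h
          · rw [zero_smul]; exact hf0
          · rw [one_smul]; exact fw1
        have hker_le : LinearMap.ker L2 ≤ K ⊔ span (ZMod 2) {u1} := by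
          intro x hx
          obtain ⟨h1, h2⟩ := hkerT x hx
          exact hu2 x h1 h2
        have e0 := ker2_rank L2
        have e1 := Submodule.finrank_mono hker_le
        have e2 := fr_sup_le K (span (ZMod 2) ({u1} : Set (Fin n → ZMod 2)))
        have e3 := fr_span1 (n := n) u1
        have lt1 : K < K ⊔ span (ZMod 2) ({a + u1} : Set (Fin n → ZMod 2)) := by
          rw [SetLike.lt_iff_le_and_exists]
          exact ⟨le_sup_left, a + u1,
            Submodule.mem_sup_right (Submodule.mem_span_singleton_self _), w1K⟩
        have d1 := Submodule.finrank_lt_finrank_of_lt lt1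
        have h3 := hNZ _ hWz
        omega
    · -- case (i)
      push_neg at hu1
      have hW0 : ∀ x ∈ LinearMap.ker L2, f x = 0 := by
        intro x hx
        obtain ⟨h1, h2⟩ := hkerT x hx
        exact ((mem_Rz hf0 h7).mp (hu1 x h1 h2)).1
      have e0 := ker2_rank L2
      have h3 := hNZ _ hW0
      omega

end Main

end Stmt19Aux2

namespace Stmt19Glue
open Stmt19Aux Stmt19Aux2 Module Submodule

variable {n : ℕ}

lemma even_cast {k : ℕ} (h : Even k) : (k : ZMod 2) = 0 := by
  obtain ⟨m, hm⟩ := h; subst hm; push_cast; exact z2add _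

section Seven

variable (E : Set (Fin n → ZMod 2)) (hE0 : (0 : Fin n → ZMod 2) ∉ E)
variable (hEven : ∀ W : Submodule (ZMod 2) (Fin n → ZMod 2),
    3 ≤ finrank (ZMod 2) W → Even (E ∩ ((W : Set (Fin n → ZMod 2)) \ {0})).ncard)

open Classical in
noncomputable def indE : (Fin n → ZMod 2) → ZMod 2 :=
  fun v => if v ∈ E then 1 else 0

include hE0 in
lemma indE_zero : indE E 0 = 0 := by
  unfold indE
  rw [if_neg hE0]

lemma indE_one {v : Fin n → ZMod 2} (h : v ∈ E) : indE E v = 1 := by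
  unfold indE; rw [if_pos h]

lemma indE_mem {v : Fin n → ZMod 2} (h : indE E v = 1) : v ∈ E := by
  by_contra hc
  unfold indE at h
  rw [if_neg hc] at h
  exact absurd h (by decide)

include hE0 hEven in
lemma indE_seven : ∀ x y z : Fin n → ZMod 2,
    indE E (x + y + z) = indE E (x+y) + indE E (x+z) + indE E (y+z) +
      indE E x + indE E y + indE E z := by
  classical
  intro x y z
  set f := indE E with hfdef
  have hf0 : f 0 = 0 := indE_zero E hE0
  by_cases hLI : LinearIndependent (ZMod 2) ![x, y, z]
  · -- the independent case : use evenness on the span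
    have hind : ∀ α β γ : ZMod 2, α • x + β • y + γ • z = 0 → α = 0 ∧ β = 0 ∧ γ = 0 := by
      intro α β γ h
      have h2 := Fintype.linearIndependent_iff.mp hLI ![α, β, γ] (by
        rw [Fin.sum_univ_three]
        simpa using h)
      exact ⟨h2 0, h2 1, h2 2⟩
    set φc : (Fin 3 → ZMod 2) → (Fin n → ZMod 2) :=
      fun v => v 0 • x + v 1 • y + v 2 • z with hφc
    have hφadd : ∀ u v, φc (u + v) = φc u + φc v := by
      intro u v
      simp only [hφc, Pi.add_apply, add_smul]
      abel
    have hφinj : ∀ u v, φc u = φc v → u = v := by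
      intro u v h
      have hsum : φc (u + v) = 0 := by
        rw [hφadd, h, vadd_self]
      have h3 := hind _ _ _ hsum
      funext i
      have hz : (u + v) i = 0 := by
        fin_cases i
        · exact h3.1
        · exact h3.2.1
        · exact h3.2.2
      have := z2eq (a := u i) (b := v i) (by simpa using hz)
      simpa using this
    set c : Fin 7 → (Fin 3 → ZMod 2) :=
      ![![1,0,0], ![0,1,0], ![0,0,1], ![1,1,0], ![1,0,1], ![0,1,1], ![1,1,1]] with hc
    have hcinj : Function.Injective c := by decide
    set g : Fin 7 → (Fin n → ZMod 2) := fun i => φc (c i) with hg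
    have hginj : Function.Injective g := fun i j h => hcinj (hφinj _ _ h)
    set W := span (ZMod 2) ({x, y, z} : Set (Fin n → ZMod 2)) with hW
    have hfr : finrank (ZMod 2) W = 3 := by
      have hs : ({x, y, z} : Set (Fin n → ZMod 2)) = Set.range ![x,y,z] := by
        ext v; simp [Matrix.range_cons, Matrix.range_empty]; tauto
      rw [hW, hs, finrank_span_eq_card hLI]
      simp
    have hφmem : ∀ v, φc v ∈ W := by
      intro v
      refine add_mem (add_mem (smul_mem _ _ ?_) (smul_mem _ _ ?_)) (smul_mem _ _ ?_) <;>
        exact subset_span (by simp)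
    have hφzero : φc 0 = 0 := by simp [hφc]
    have hgne : ∀ i, g i ≠ 0 := by
      intro i h
      have : c i = 0 := hφinj _ _ (by rw [hφzero]; exact h)
      revert this
      fin_cases i <;> decide
    have hset : (W : Set (Fin n → ZMod 2)) \ {0} = Set.range g := by
      ext v
      constructor
      · rintro ⟨hvW, hv0⟩
        rw [hW] at hvW
        rw [show ({x, y, z} : Set (Fin n → ZMod 2)) = insert x {y, z} from rfl,
          Submodule.span_insert] at hvW
        obtain ⟨v1, hv1, v2, hv2, rfl⟩ := Submodule.mem_sup.mp hvW
        obtain ⟨α, rfl⟩ := Submodule.mem_span_singleton.mp hv1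
        obtain ⟨β, γ, rfl⟩ := Submodule.mem_span_pair.mp hv2
        have hvφ : α • x + (β • y + γ • z) = φc ![α, β, γ] := by
          simp [hφc, add_assoc]
        rw [hvφ] at hv0 ⊢
        have hne : (![α, β, γ] : Fin 3 → ZMod 2) ≠ 0 := by
          intro h
          rw [h, hφzero] at hv0
          exact hv0 rfl
        have : ∃ i, c i = ![α, β, γ] := by
          revert hne
          rcases z2 α with h | h <;> rcases z2 β with h' | h' <;>
            rcases z2 γ with h'' | h'' <;> subst h <;> subst h' <;> subst h'' <;>
            intro hne
          · exact absurd (by funext i; fin_cases i <;> rfl) hne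
          · exact ⟨2, by funext i; fin_cases i <;> rfl⟩
          · exact ⟨1, by funext i; fin_cases i <;> rfl⟩
          · exact ⟨5, by funext i; fin_cases i <;> rfl⟩
          · exact ⟨0, by funext i; fin_cases i <;> rfl⟩
          · exact ⟨4, by funext i; fin_cases i <;> rfl⟩
          · exact ⟨3, by funext i; fin_cases i <;> rfl⟩
          · exact ⟨6, by funext i; fin_cases i <;> rfl⟩
        obtain ⟨i, hi⟩ := this
        exact ⟨i, by rw [show g i = φc (c i) from rfl, hi]⟩
      · rintro ⟨i, rfl⟩
        exact ⟨hφmem _, hgne i⟩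
    have heven := hEven W (by rw [hfr])
    rw [hset] at heven
    have hrange : Set.range g = ↑(Finset.univ.image g) := by simp
    rw [hrange] at heven
    have hEq : E ∩ ↑(Finset.univ.image g) =
        ↑((Finset.univ.image g).filter (· ∈ E)) := by
      ext v
      simp [Finset.mem_filter, and_comm]
    rw [hEq, Set.ncard_coe_finset] at heven
    have hcast := even_cast heven
    rw [← Finset.sum_boole] at hcast
    rw [Finset.sum_image (fun a _ b _ h => hginj h)] at hcast
    have hite : ∀ v, (if v ∈ E then (1 : ZMod 2) else 0) = f v := by
      intro v
      by_cases h : v ∈ E <;> simp [hfdef, indE, h]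
    rw [Fin.sum_univ_seven] at hcast
    simp only [hite] at hcast
    have egen : ∀ (i : Fin 7) (v : Fin 3 → ZMod 2), c i = v →
        g i = v 0 • x + v 1 • y + v 2 • z := by
      intro i v h
      show φc (c i) = _
      rw [h, hφc]
    have e0 : g 0 = x := by
      rw [egen 0 ![1,0,0] (by rw [hc]; decide)]
      simp [Matrix.cons_val_zero, Matrix.cons_val_one, Matrix.head_cons,
        Matrix.cons_val_two, Matrix.tail_cons]
    have e1 : g 1 = y := by
      rw [egen 1 ![0,1,0] (by rw [hc]; decide)]
      simp [Matrix.cons_val_zero, Matrix.cons_val_one, Matrix.head_cons,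
        Matrix.cons_val_two, Matrix.tail_cons]
    have e2 : g 2 = z := by
      rw [egen 2 ![0,0,1] (by rw [hc]; decide)]
      simp [Matrix.cons_val_zero, Matrix.cons_val_one, Matrix.head_cons,
        Matrix.cons_val_two, Matrix.tail_cons]
    have e3 : g 3 = x + y := by
      rw [egen 3 ![1,1,0] (by rw [hc]; decide)]
      simp [Matrix.cons_val_zero, Matrix.cons_val_one, Matrix.head_cons,
        Matrix.cons_val_two, Matrix.tail_cons]
    have e4 : g 4 = x + z := by
      rw [egen 4 ![1,0,1] (by rw [hc]; decide)]
      simp [Matrix.cons_val_zero, Matrix.cons_val_one, Matrix.head_cons,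
        Matrix.cons_val_two, Matrix.tail_cons]
    have e5 : g 5 = y + z := by
      rw [egen 5 ![0,1,1] (by rw [hc]; decide)]
      simp [Matrix.cons_val_zero, Matrix.cons_val_one, Matrix.head_cons,
        Matrix.cons_val_two, Matrix.tail_cons]
    have e6 : g 6 = x + y + z := by
      rw [egen 6 ![1,1,1] (by rw [hc]; decide)]
      simp [Matrix.cons_val_zero, Matrix.cons_val_one, Matrix.head_cons,
        Matrix.cons_val_two, Matrix.tail_cons, add_assoc]
    rw [e0, e1, e2, e3, e4, e5, e6] at hcast
    -- hcast : f x + f y + f z + f (x+y) + f (x+z) + f (y+z) + f (x+y+z) = 0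
    revert hcast
    generalize f (x+y+z) = A
    generalize f (x+y) = B
    generalize f (x+z) = C
    generalize f (y+z) = D
    generalize f x = P
    generalize f y = Q
    generalize f z = R
    revert A B C D P Q R
    decide
  · -- the dependent case : pure algebra
    rw [Fintype.not_linearIndependent_iff] at hLI
    obtain ⟨gc, hgsum, i, hgi⟩ := hLI
    rw [Fin.sum_univ_three] at hgsum
    simp only [Matrix.cons_val_zero, Matrix.cons_val_one, Matrix.head_cons,
      Matrix.cons_val_two, Matrix.tail_cons] at hgsum
    rcases z2 (gc 0) with h0 | h0 <;> rcases z2 (gc 1) with h1 | h1 <;>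
      rcases z2 (gc 2) with h2 | h2 <;> rw [h0, h1, h2] at hgsum <;>
      simp only [zero_smul, one_smul, zero_add, add_zero] at hgsum
    · exfalso; fin_cases i
      exacts [hgi h0, hgi h1, hgi h2]
    · -- z = 0
      subst hgsum
      simp only [add_zero, hf0]
      generalize f (x+y) = A; generalize f x = B; generalize f y = C
      revert A B C; decide
    · -- y = 0
      subst hgsum
      simp only [add_zero, zero_add, hf0]
      generalize f (x+z) = A; generalize f x = B; generalize f z = C
      revert A B C; decide
    · -- y + z = 0, y = z
      have hyz := vcancel hgsum
      subst hyz
      rw [shp3, vadd_self, hf0]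
      generalize f (x+y) = A; generalize f x = B; generalize f y = C
      revert A B C; decide
    · -- x = 0
      subst hgsum
      simp only [zero_add, hf0]
      generalize f (y+z) = A; generalize f y = B; generalize f z = C
      revert A B C; decide
    · -- x + z = 0, x = z
      have hxz := vcancel hgsum
      subst hxz
      rw [shp4, vadd_self, add_comm y x]
      rw [hf0]
      generalize f (x+y) = A; generalize f x = B; generalize f y = C
      revert A B C; decide
    · -- x + y = 0, x = y
      have hxy := vcancel hgsum
      subst hxy
      rw [vadd_self, zero_add, hf0]
      generalize f (x+z) = A; generalize f x = B; generalize f z = C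
      revert A B C; decide
    · -- x + y + z = 0, x + y = z
      have hxyz := vcancel hgsum
      subst hxyz
      rw [vadd_self, hf0, shp1, shpE]
      generalize f (x+y) = A; generalize f x = B; generalize f y = C
      revert A B C; decide

end Seven

end Stmt19Glue

/-- If `M ∈ ℰ₃` and `χ(M) ≥ 3`, then `M` contains `K₅` as an induced
restriction. -/
theorem stmt19 (M : BinMatroid) (hM : M.MemE 3) (hchi : 3 ≤ M.critNum) :
    M.HasIR K5 := by
  classical
  open Stmt19Aux Stmt19Aux2 Stmt19Glue Module Submodule in
  show ∃ φ : (Fin K5.dim → ZMod 2) →ₗ[ZMod 2] (Fin M.dim → ZMod 2),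
    Function.Injective φ ∧ φ '' K5.E = M.E ∩ (Set.range φ \ {0})
  open Stmt19Aux Stmt19Aux2 Stmt19Glue Module Submodule in
  · set f := indE M.E with hfdef
    have hf0 : f 0 = 0 := indE_zero M.E M.zero_not_mem
    have h7 : ∀ x y z : Fin M.dim → ZMod 2,
        f (x + y + z) = f (x+y) + f (x+z) + f (y+z) + f x + f y + f z :=
      indE_seven M.E M.zero_not_mem hM
    have hNZ : ∀ W : Submodule (ZMod 2) (Fin M.dim → ZMod 2),
        (∀ x ∈ W, f x = 0) → finrank (ZMod 2) W + 3 ≤ M.dim := by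
      intro W hW
      have hfr_le : finrank (ZMod 2) W ≤ M.dim := by
        have := Submodule.finrank_le W
        rwa [frV] at this
      have hd : Disjoint ((W : Set (Fin M.dim → ZMod 2)) \ {0}) M.E := by
        rw [Set.disjoint_left]
        rintro v ⟨hvW, _⟩ hvE
        have h1 := hW v hvW
        have h2 : f v = 1 := indE_one M.E hvE
        rw [h1] at h2
        exact absurd h2 (by decide)
      have hmem : M.dim - finrank (ZMod 2) W ∈
          {k : ℕ | ∃ W' : Submodule (ZMod 2) (Fin M.dim → ZMod 2),
            Module.finrank (ZMod 2) W' = M.dim - k ∧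
            Disjoint ((W' : Set (Fin M.dim → ZMod 2)) \ {0}) M.E} :=
        ⟨W, by omega, hd⟩
      have hle : M.critNum ≤ M.dim - finrank (ZMod 2) W := Nat.sInf_le hmem
      omega
    obtain ⟨a, b, c, d, hfa, hfb, hfc, hfd, hab, hac, had, hbc, hbd, hcd⟩ :=
      clique_exists hf0 h7 hNZ
    -- values of f on sums
    have fab : f (a+b) = 1 := by rw [f_add (f := f) a b, hfa, hfb, hab]; decide
    have fac : f (a+c) = 1 := by rw [f_add (f := f) a c, hfa, hfc, hac]; decide
    have fad : f (a+d) = 1 := by rw [f_add (f := f) a d, hfa, hfd, had]; decide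
    have fbc : f (b+c) = 1 := by rw [f_add (f := f) b c, hfb, hfc, hbc]; decide
    have fbd : f (b+d) = 1 := by rw [f_add (f := f) b d, hfb, hfd, hbd]; decide
    have fcd : f (c+d) = 1 := by rw [f_add (f := f) c d, hfc, hfd, hcd]; decide
    have fabc : f (a+b+c) = 0 := by
      rw [f_add3 hf0 h7, hfa, hfb, hfc, hab, hac, hbc]; decide
    have fabd : f (a+b+d) = 0 := by
      rw [f_add3 hf0 h7, hfa, hfb, hfd, hab, had, hbd]; decide
    have facd : f (a+c+d) = 0 := by
      rw [f_add3 hf0 h7, hfa, hfc, hfd, hac, had, hcd]; decide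
    have fbcd : f (b+c+d) = 0 := by
      rw [f_add3 hf0 h7, hfb, hfc, hfd, hbc, hbd, hcd]; decide
    have hBabcd : Bf f (a+b+c) d = 1 := by
      rw [Bf_add' hf0 h7, Bf_add' hf0 h7, had, hbd, hcd]; decide
    have fabcd : f (a+b+c+d) = 0 := by
      rw [f_add (f := f) (a+b+c) d, fabc, hfd, hBabcd]; decide
    set φ : (Fin 4 → ZMod 2) →ₗ[ZMod 2] (Fin M.dim → ZMod 2) :=
      { toFun := fun w => w 0 • a + w 1 • b + w 2 • c + w 3 • d
        map_add' := by
          intro u v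
          simp only [Pi.add_apply, add_smul]
          abel
        map_smul' := by
          intro r u
          simp only [Pi.smul_apply, smul_eq_mul, RingHom.id_apply, smul_add, mul_smul] }
      with hφdef
    have hφapp : ∀ w : Fin 4 → ZMod 2, φ w = w 0 • a + w 1 • b + w 2 • c + w 3 • d :=
      fun w => rfl
    have hval : ∀ w : Fin 4 → ZMod 2, f (φ w) =
        w 0 + w 1 + w 2 + w 3 + w 0 * w 1 + w 0 * w 2 + w 0 * w 3 +
        w 1 * w 2 + w 1 * w 3 + w 2 * w 3 := by
      intro w
      rw [hφapp w]
      rcases z2 (w 0) with h0 | h0 <;> rcases z2 (w 1) with h1 | h1 <;>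
        rcases z2 (w 2) with h2 | h2 <;> rcases z2 (w 3) with h3 | h3 <;>
        rw [h0, h1, h2, h3] <;>
        simp only [zero_smul, one_smul, zero_add, add_zero]
      · rw [hf0]; decide
      · rw [hfd]; decide
      · rw [hfc]; decide
      · rw [fcd]; decide
      · rw [hfb]; decide
      · rw [fbd]; decide
      · rw [fbc]; decide
      · rw [fbcd]; decide
      · rw [hfa]; decide
      · rw [fad]; decide
      · rw [fac]; decide
      · rw [facd]; decide
      · rw [fab]; decide
      · rw [fabd]; decide
      · rw [fabc]; decide
      · rw [fabcd]; decide
    have hker : ∀ w : Fin 4 → ZMod 2, φ w = 0 → w = 0 := by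
      intro w hw
      rw [hφapp w] at hw
      rcases z2 (w 0) with h0 | h0 <;> rcases z2 (w 1) with h1 | h1 <;>
        rcases z2 (w 2) with h2 | h2 <;> rcases z2 (w 3) with h3 | h3 <;>
        rw [h0, h1, h2, h3] at hw <;>
        simp only [zero_smul, one_smul, zero_add, add_zero] at hw
      -- (0,0,0,0)
      · funext i
        fin_cases i <;> simp only [Pi.zero_apply] <;> assumption
      -- d = 0
      · rw [hw, hf0] at hfd; exact absurd hfd (by decide)
      -- c = 0
      · rw [hw, hf0] at hfc; exact absurd hfc (by decide)
      -- c + d = 0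
      · have hB : Bf f c d = 0 := by
          show f (c + d) + f c + f d = 0
          rw [hw, hf0, hfc, hfd]; decide
        rw [hB] at hcd; exact absurd hcd (by decide)
      -- b = 0
      · rw [hw, hf0] at hfb; exact absurd hfb (by decide)
      -- b + d = 0
      · have hB : Bf f b d = 0 := by
          show f (b + d) + f b + f d = 0
          rw [hw, hf0, hfb, hfd]; decide
        rw [hB] at hbd; exact absurd hbd (by decide)
      -- b + c = 0
      · have hB : Bf f b c = 0 := by
          show f (b + c) + f b + f c = 0
          rw [hw, hf0, hfb, hfc]; decide
        rw [hB] at hbc; exact absurd hbc (by decide)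
      -- b + c + d = 0
      · have hB : Bf f a (b+c+d) = 1 := by
          rw [Bf_add h7, Bf_add h7, hab, hac, had]; decide
        rw [hw, Bf_zero hf0] at hB
        exact absurd hB (by decide)
      -- a = 0
      · rw [hw, hf0] at hfa; exact absurd hfa (by decide)
      -- a + d = 0
      · have hB : Bf f a d = 0 := by
          show f (a + d) + f a + f d = 0
          rw [hw, hf0, hfa, hfd]; decide
        rw [hB] at had; exact absurd had (by decide)
      -- a + c = 0
      · have hB : Bf f a c = 0 := by
          show f (a + c) + f a + f c = 0
          rw [hw, hf0, hfa, hfc]; decide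
        rw [hB] at hac; exact absurd hac (by decide)
      -- a + c + d = 0
      · have hB : Bf f b (a+c+d) = 1 := by
          rw [Bf_add h7, Bf_add h7, Bf_comm (f := f) b a, hab, hbc, hbd]; decide
        rw [hw, Bf_zero hf0] at hB
        exact absurd hB (by decide)
      -- a + b = 0
      · have hB : Bf f a b = 0 := by
          show f (a + b) + f a + f b = 0
          rw [hw, hf0, hfa, hfb]; decide
        rw [hB] at hab; exact absurd hab (by decide)
      -- a + b + d = 0
      · have hB : Bf f c (a+b+d) = 1 := by
          rw [Bf_add h7, Bf_add h7, Bf_comm (f := f) c a, hac,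
            Bf_comm (f := f) c b, hbc, hcd]; decide
        rw [hw, Bf_zero hf0] at hB
        exact absurd hB (by decide)
      -- a + b + c = 0
      · have hB : Bf f d (a+b+c) = 1 := by
          rw [Bf_add h7, Bf_add h7, Bf_comm (f := f) d a, had,
            Bf_comm (f := f) d b, hbd, Bf_comm (f := f) d c, hcd]; decide
        rw [hw, Bf_zero hf0] at hB
        exact absurd hB (by decide)
      -- a + b + c + d = 0
      · have heq := vcancel hw
        rw [← heq, fabc] at hfd
        exact absurd hfd (by decide)
    have hinj : Function.Injective φ := by
      intro u v h
      have h2 : φ (u + v) = 0 := by rw [map_add, h, vadd_self]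
      exact vcancel (hker _ h2)
    have hK5iff : ∀ w : Fin 4 → ZMod 2,
        (w 0 + w 1 + w 2 + w 3 + w 0 * w 1 + w 0 * w 2 + w 0 * w 3 +
          w 1 * w 2 + w 1 * w 3 + w 2 * w 3 = 1) ↔
        (hammingNorm w = 1 ∨ hammingNorm w = 2) := by decide
    refine ⟨φ, hinj, ?_⟩
    ext v
    constructor
    · rintro ⟨w, hwE, rfl⟩
      have hwE' : hammingNorm w = 1 ∨ hammingNorm w = 2 := hwE
      have hw0 : w ≠ 0 := by
        intro h; subst h; revert hwE'; decide
      refine ⟨?_, ⟨w, rfl⟩, ?_⟩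
      · have h1 := (hK5iff w).mpr hwE'
        rw [← hval w] at h1
        exact indE_mem M.E h1
      · simp only [Set.mem_singleton_iff]
        intro h
        exact hw0 (hker w h)
    · rintro ⟨hvE, ⟨w, rfl⟩, hv0⟩
      have h1 : f (φ w) = 1 := indE_one M.E hvE
      rw [hval w] at h1
      exact ⟨w, (hK5iff w).mp h1, rfl⟩
end
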